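/- arXiv:1305.3534 — 8 statements merged into one kernel-verified Lean document; each statement's English description precedes it below -/
import Mathlib

section
/- Let μ be a critical probability distribution on {0,2,3,...} with finite variance σ². Define the series A = Σ_{i≥0} i·μ̄_{2i+1}, B = Σ_{i≥0} i·μ̄_{2i}, C = Σ_{i≥0} i·μ̄_{2i+2}, and set c_geo = ((A+B)·μ_{2Z} + (A+C)·μ_{2N}) / (μ_{2Z} + μ_{2N}). Then c_geo = (1/4)·(σ² + μ₀·μ_{2Z}/(2·μ_{2Z} − μ₀)). -/
/-!
Exchanging the order of summation turns `Σ_i i·μ̄_{2i+c}` into `Σ_n μ_n·T_c(n)`, where `T_c(n)` is a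
triangular number. For every `n` the combined coefficients satisfy
`4(T_1 + T_0)(n) = n² − n + 2⌊n/2⌋` and `4(T_1 + T_2)(n) = n² − n − 2⌊n/2⌋`, and summing against `μ`
(using `Σ nμ_n = 1` and `Σ 2⌊n/2⌋μ_n = Σ nμ_n − μ_odd = μ_{2Z}`) gives
`4(A + B) = σ² + μ_{2Z}` and `4(A + C) = σ² − μ_{2Z}`. With `μ_{2Z} = μ₀ + μ_{2N}` the claim is then
linear algebra; `μ_{2Z} > 0` because a law on the odd numbers `≥ 3` has mean at least `3`.
The exchanges of summation are done in `ℝ≥0∞`, where they need no summability hypotheses.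
-/

open Finset
open scoped ENNReal

lemma sum_range_id_add_sum_range_succ_id (m : ℕ) :
    ∑ i ∈ range m, i + ∑ i ∈ range (m + 1), i = m * m := by
  induction m with
  | zero => simp
  | succ m ih => rw [sum_range_succ _ (m + 1)]; nlinarith [ih, sum_range_succ (fun i => i) m]

lemma four_mul_sum_range_id_half_succ (n : ℕ) :
    4 * (∑ i ∈ range ((n + 1) / 2), i + ∑ i ∈ range ((n + 2) / 2), i) + n
      = n * n + 2 * (n / 2) := by
  obtain ⟨m, rfl | rfl⟩ := Nat.even_or_odd' n
  · rw [show (2 * m + 1) / 2 = m by omega, show (2 * m + 2) / 2 = m + 1 by omega,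
      show 2 * m / 2 = m by omega, sum_range_id_add_sum_range_succ_id]
    ring
  · rw [show (2 * m + 1 + 1) / 2 = m + 1 by omega, show (2 * m + 1 + 2) / 2 = m + 1 by omega,
      show (2 * m + 1) / 2 = m by omega]
    nlinarith [sum_range_id_add_sum_range_succ_id m, sum_range_succ (fun i => i) m]

lemma four_mul_sum_range_id_half_pred (n : ℕ) :
    4 * (∑ i ∈ range ((n + 1) / 2), i + ∑ i ∈ range (n / 2), i) + n + 2 * (n / 2) = n * n := by
  obtain ⟨m, rfl | rfl⟩ := Nat.even_or_odd' n
  · rw [show (2 * m + 1) / 2 = m by omega, show 2 * m / 2 = m by omega]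
    nlinarith [sum_range_id_add_sum_range_succ_id m, sum_range_succ (fun i => i) m]
  · rw [show (2 * m + 1 + 1) / 2 = m + 1 by omega, show (2 * m + 1) / 2 = m by omega,
      add_comm (∑ i ∈ range (m + 1), i), sum_range_id_add_sum_range_succ_id]
    ring

namespace ENNReal

variable (ν : ℕ → ℝ≥0∞)

lemma tsum_add_left_eq_tsum_ite (k : ℕ) :
    ∑' j, ν (k + j) = ∑' n, if k ≤ n then ν n else 0 := by
  rw [← Summable.sum_add_tsum_nat_add' (f := fun n => if k ≤ n then ν n else 0) (k := k)
      ENNReal.summable,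
    sum_eq_zero fun i hi => if_neg (by simpa using hi), zero_add]
  exact tsum_congr fun j => by rw [if_pos (Nat.le_add_left k j), add_comm]

lemma tsum_mul_tsum_add_left (w : ℕ → ℝ≥0∞) (a : ℕ → ℕ) :
    ∑' i, w i * ∑' j, ν (a i + j) = ∑' n, (∑' i, if a i ≤ n then w i else 0) * ν n := by
  simp_rw [tsum_add_left_eq_tsum_ite, ← ENNReal.tsum_mul_left, ← ENNReal.tsum_mul_right,
    mul_ite, ite_mul, mul_zero, zero_mul]
  exact ENNReal.tsum_comm

/-- `2i + c ≤ n ↔ i < (n + 2 - c) / 2` holds for every `c`, thanks to truncated subtraction. -/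
lemma tsum_natCast_mul_tsum_two_mul_add (c : ℕ) :
    ∑' i : ℕ, (i : ℝ≥0∞) * ∑' j, ν (2 * i + c + j)
      = ∑' n, ((∑ i ∈ range ((n + 2 - c) / 2), i : ℕ) : ℝ≥0∞) * ν n := by
  rw [tsum_mul_tsum_add_left]
  refine tsum_congr fun n => congrArg (· * ν n) ?_
  rw [tsum_eq_sum (s := range ((n + 2 - c) / 2)) fun i hi => if_neg (by simp at hi; omega),
    Nat.cast_sum]
  exact sum_congr rfl fun i hi => if_pos (by simp at hi; omega)

lemma tsum_natCast_mul_tsum_two_mul_add_zero :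
    ∑' i : ℕ, (i : ℝ≥0∞) * ∑' j, ν (2 * i + j)
      = ∑' n, ((∑ i ∈ range ((n + 2) / 2), i : ℕ) : ℝ≥0∞) * ν n := by
  simpa using tsum_natCast_mul_tsum_two_mul_add ν 0

lemma two_mul_tsum_div_two_add_tsum_odd :
    2 * ∑' n, ((n / 2 : ℕ) : ℝ≥0∞) * ν n + ∑' k, ν (2 * k + 1) = ∑' n : ℕ, (n : ℝ≥0∞) * ν n := by
  rw [← tsum_even_add_odd (f := fun n : ℕ => ((n / 2 : ℕ) : ℝ≥0∞) * ν n) ENNReal.summable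
      ENNReal.summable,
    ← tsum_even_add_odd (f := fun n : ℕ => (n : ℝ≥0∞) * ν n) ENNReal.summable ENNReal.summable]
  simp only [Nat.mul_div_cancel_left _ two_pos, show ∀ k, (2 * k + 1) / 2 = k by omega,
    mul_add, ← ENNReal.tsum_mul_left, ← ENNReal.tsum_add]
  push_cast
  exact tsum_congr fun k => by ring

lemma four_mul_tsum_tail_odd_add_even :
    4 * ∑' i : ℕ, (i : ℝ≥0∞) * ∑' j, ν (2 * i + 1 + j)
      + 4 * ∑' i : ℕ, (i : ℝ≥0∞) * ∑' j, ν (2 * i + j) + ∑' n : ℕ, (n : ℝ≥0∞) * ν n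
      = ∑' n : ℕ, (n : ℝ≥0∞) ^ 2 * ν n + 2 * ∑' n, ((n / 2 : ℕ) : ℝ≥0∞) * ν n := by
  rw [tsum_natCast_mul_tsum_two_mul_add, tsum_natCast_mul_tsum_two_mul_add_zero]
  simp only [← ENNReal.tsum_mul_left, ← ENNReal.tsum_add]
  refine tsum_congr fun n => ?_
  calc _ = ((4 * (∑ i ∈ range ((n + 1) / 2), i + ∑ i ∈ range ((n + 2) / 2), i) + n : ℕ)
        : ℝ≥0∞) * ν n := by push_cast; ring
    _ = _ := by rw [four_mul_sum_range_id_half_succ]; push_cast; ring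

lemma four_mul_tsum_tail_odd_add_even_succ :
    4 * ∑' i : ℕ, (i : ℝ≥0∞) * ∑' j, ν (2 * i + 1 + j)
      + 4 * ∑' i : ℕ, (i : ℝ≥0∞) * ∑' j, ν (2 * i + 2 + j) + ∑' n : ℕ, (n : ℝ≥0∞) * ν n
      + 2 * ∑' n, ((n / 2 : ℕ) : ℝ≥0∞) * ν n = ∑' n : ℕ, (n : ℝ≥0∞) ^ 2 * ν n := by
  rw [tsum_natCast_mul_tsum_two_mul_add, tsum_natCast_mul_tsum_two_mul_add]
  simp only [← ENNReal.tsum_mul_left, ← ENNReal.tsum_add]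
  refine tsum_congr fun n => ?_
  calc _ = ((4 * (∑ i ∈ range ((n + 1) / 2), i + ∑ i ∈ range (n / 2), i) + n + 2 * (n / 2) : ℕ)
        : ℝ≥0∞) * ν n := by push_cast; ring
    _ = _ := by rw [four_mul_sum_range_id_half_pred]; push_cast; ring

lemma tsum_natCast_mul_le_three_mul_tsum_div_two (h1 : ν 1 = 0) :
    ∑' n : ℕ, (n : ℝ≥0∞) * ν n ≤ 3 * ∑' n, ((n / 2 : ℕ) : ℝ≥0∞) * ν n := by
  rw [← ENNReal.tsum_mul_left]
  refine ENNReal.tsum_le_tsum fun n => ?_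
  rcases eq_or_ne n 1 with rfl | hn
  · simp [h1]
  · rw [← mul_assoc]
    gcongr
    exact_mod_cast (by omega : n ≤ 3 * (n / 2))

end ENNReal

lemma summable_of_tsum_ne_zero {f : ℕ → ℝ} (h : ∑' n, f n ≠ 0) : Summable f := by
  by_contra hf
  exact h (tsum_eq_zero_of_not_summable hf)

section OfReal

open ENNReal

variable {μ : ℕ → ℝ}

lemma toReal_tsum_ofReal (hnn : ∀ n, 0 ≤ μ n) :
    (∑' n, ENNReal.ofReal (μ n)).toReal = ∑' n, μ n := by
  rw [ENNReal.tsum_toReal_eq fun _ => ofReal_ne_top]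
  exact tsum_congr fun n => toReal_ofReal (hnn n)

lemma tsum_natCast_pow_mul_ofReal (hnn : ∀ n, 0 ≤ μ n) (k : ℕ)
    (h : Summable fun n : ℕ => (n : ℝ) ^ k * μ n) :
    ∑' n : ℕ, (n : ℝ≥0∞) ^ k * ENNReal.ofReal (μ n)
      = ENNReal.ofReal (∑' n : ℕ, (n : ℝ) ^ k * μ n) := by
  rw [ofReal_tsum_of_nonneg (fun n => mul_nonneg (by positivity) (hnn n)) h]
  exact tsum_congr fun n => by
    rw [ofReal_mul (by positivity), ofReal_pow n.cast_nonneg, ofReal_natCast]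

lemma toReal_tsum_natCast_mul_tsum_ofReal (hnn : ∀ n, 0 ≤ μ n) (hμ : Summable μ) (a : ℕ → ℕ) :
    (∑' i : ℕ, (i : ℝ≥0∞) * ∑' j, ENNReal.ofReal (μ (a i + j))).toReal
      = ∑' i : ℕ, (i : ℝ) * ∑' j, μ (a i + j) := by
  rw [← toReal_tsum_ofReal fun i => mul_nonneg i.cast_nonneg (tsum_nonneg fun j => hnn _)]
  refine congrArg _ (tsum_congr fun i => ?_)
  rw [ofReal_mul i.cast_nonneg, ofReal_natCast,
    ofReal_tsum_of_nonneg (fun j => hnn _) (hμ.comp_injective (add_right_injective _))]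

lemma tsum_ofReal_eq_one (hnn : ∀ n, 0 ≤ μ n) (hsum : ∑' n, μ n = 1) :
    ∑' n, ENNReal.ofReal (μ n) = 1 := by
  simpa [hsum] using tsum_natCast_pow_mul_ofReal hnn 0
    (by simpa using summable_of_tsum_ne_zero (hsum ▸ one_ne_zero))

lemma tsum_natCast_mul_ofReal_eq_one (hnn : ∀ n, 0 ≤ μ n)
    (hmean : ∑' n : ℕ, (n : ℝ) * μ n = 1) : ∑' n : ℕ, (n : ℝ≥0∞) * ENNReal.ofReal (μ n) = 1 := by
  simpa [hmean] using tsum_natCast_pow_mul_ofReal hnn 1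
    (by simpa using summable_of_tsum_ne_zero (hmean ▸ one_ne_zero))

lemma two_mul_tsum_div_two_mul_ofReal (hnn : ∀ n, 0 ≤ μ n) (hsum : ∑' n, μ n = 1)
    (hmean : ∑' n : ℕ, (n : ℝ) * μ n = 1) :
    2 * ∑' n, ((n / 2 : ℕ) : ℝ≥0∞) * ENNReal.ofReal (μ n)
      = ENNReal.ofReal (∑' i, μ (2 * i)) := by
  have hμ := summable_of_tsum_ne_zero (hsum ▸ one_ne_zero)
  have h := ENNReal.two_mul_tsum_div_two_add_tsum_odd fun n => ENNReal.ofReal (μ n)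
  rw [tsum_natCast_mul_ofReal_eq_one hnn hmean, ← tsum_ofReal_eq_one hnn hsum,
    ← tsum_even_add_odd (f := fun n => ENNReal.ofReal (μ n)) ENNReal.summable
      ENNReal.summable] at h
  have hodd : ∑' k, ENNReal.ofReal (μ (2 * k + 1)) ≠ ∞ :=
    ne_top_of_le_ne_top (by rw [tsum_ofReal_eq_one hnn hsum]; exact one_ne_top)
      (ENNReal.tsum_comp_le_tsum_of_injective (f := fun k => 2 * k + 1)
        (fun a b hab => by simp only at hab; omega) fun n => ENNReal.ofReal (μ n))
  rw [(ENNReal.add_left_inj hodd).1 h,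
    ofReal_tsum_of_nonneg (fun i => hnn _) (hμ.comp_injective (mul_right_injective₀ two_ne_zero))]

lemma toReal_four_mul_add_four_mul_add_one {x y : ℝ≥0∞} (h : 4 * x + 4 * y + 1 ≠ ∞) :
    (4 * x + 4 * y + 1).toReal = 4 * x.toReal + 4 * y.toReal + 1 := by
  simp only [add_ne_top] at h
  rw [toReal_add (add_ne_top.2 h.1) one_ne_top, toReal_add h.1.1 h.1.2, toReal_mul, toReal_mul]
  norm_num

lemma four_mul_tsum_tail_odd_add_even (hnn : ∀ n, 0 ≤ μ n) (hsum : ∑' n, μ n = 1)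
    (hmean : ∑' n : ℕ, (n : ℝ) * μ n = 1) (hvar : Summable fun n : ℕ => (n : ℝ) ^ 2 * μ n) :
    4 * (∑' i : ℕ, (i : ℝ) * ∑' j, μ (2 * i + 1 + j) + ∑' i : ℕ, (i : ℝ) * ∑' j, μ (2 * i + j))
      = ∑' n : ℕ, (n : ℝ) ^ 2 * μ n - 1 + ∑' i, μ (2 * i) := by
  have hμ := summable_of_tsum_ne_zero (hsum ▸ one_ne_zero)
  have h := ENNReal.four_mul_tsum_tail_odd_add_even fun n => ENNReal.ofReal (μ n)
  rw [tsum_natCast_mul_ofReal_eq_one hnn hmean, tsum_natCast_pow_mul_ofReal hnn 2 hvar,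
    two_mul_tsum_div_two_mul_ofReal hnn hsum hmean] at h
  have := congrArg ENNReal.toReal h
  rw [toReal_four_mul_add_four_mul_add_one (h ▸ add_ne_top.2 ⟨ofReal_ne_top, ofReal_ne_top⟩),
    toReal_tsum_natCast_mul_tsum_ofReal hnn hμ (fun i => 2 * i + 1),
    toReal_tsum_natCast_mul_tsum_ofReal hnn hμ (fun i => 2 * i),
    toReal_add ofReal_ne_top ofReal_ne_top,
    toReal_ofReal (tsum_nonneg fun n => mul_nonneg (sq_nonneg _) (hnn n)),
    toReal_ofReal (tsum_nonneg fun n => hnn _)] at this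
  linarith

lemma four_mul_tsum_tail_odd_add_even_succ (hnn : ∀ n, 0 ≤ μ n) (hsum : ∑' n, μ n = 1)
    (hmean : ∑' n : ℕ, (n : ℝ) * μ n = 1) (hvar : Summable fun n : ℕ => (n : ℝ) ^ 2 * μ n) :
    4 * (∑' i : ℕ, (i : ℝ) * ∑' j, μ (2 * i + 1 + j) + ∑' i : ℕ, (i : ℝ) * ∑' j, μ (2 * i + 2 + j))
      = ∑' n : ℕ, (n : ℝ) ^ 2 * μ n - 1 - ∑' i, μ (2 * i) := by
  have hμ := summable_of_tsum_ne_zero (hsum ▸ one_ne_zero)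
  have h := ENNReal.four_mul_tsum_tail_odd_add_even_succ fun n => ENNReal.ofReal (μ n)
  rw [tsum_natCast_mul_ofReal_eq_one hnn hmean, tsum_natCast_pow_mul_ofReal hnn 2 hvar,
    two_mul_tsum_div_two_mul_ofReal hnn hsum hmean] at h
  have hfin : _ ≠ ∞ := (add_ne_top.1 (h ▸ ofReal_ne_top)).1
  have := congrArg ENNReal.toReal h
  rw [toReal_add hfin ofReal_ne_top, toReal_four_mul_add_four_mul_add_one hfin,
    toReal_tsum_natCast_mul_tsum_ofReal hnn hμ (fun i => 2 * i + 1),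
    toReal_tsum_natCast_mul_tsum_ofReal hnn hμ (fun i => 2 * i + 2),
    toReal_ofReal (tsum_nonneg fun n => mul_nonneg (sq_nonneg _) (hnn n)),
    toReal_ofReal (tsum_nonneg fun n => hnn _)] at this
  linarith

lemma tsum_two_mul_pos (hnn : ∀ n, 0 ≤ μ n) (h1 : μ 1 = 0) (hsum : ∑' n, μ n = 1)
    (hmean : ∑' n : ℕ, (n : ℝ) * μ n = 1) : 0 < ∑' i, μ (2 * i) := by
  have h := ENNReal.tsum_natCast_mul_le_three_mul_tsum_div_two
    (fun n => ENNReal.ofReal (μ n)) (by simp [h1])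
  rw [tsum_natCast_mul_ofReal_eq_one hnn hmean] at h
  rw [← ofReal_pos, ← two_mul_tsum_div_two_mul_ofReal hnn hsum hmean, pos_iff_ne_zero]
  intro h0
  rw [mul_eq_zero, or_iff_right two_ne_zero] at h0
  simp [h0] at h

end OfReal

/-- Lemma 7 of the paper: the constant `c_geo(μ)` defined through the series
`A = Σ_{i≥0} i·μ̄_{2i+1}`, `B = Σ_{i≥0} i·μ̄_{2i}`, `C = Σ_{i≥0} i·μ̄_{2i+2}` equals
`(1/4)·(σ² + μ₀·μ_{2Z}/(2·μ_{2Z} − μ₀))`. -/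
theorem stmt_0 (μ : ℕ → ℝ) (hnn : ∀ i, 0 ≤ μ i) (h1 : μ 1 = 0)
    (hsum : ∑' i : ℕ, μ i = 1) (hmean : ∑' i : ℕ, (i : ℝ) * μ i = 1)
    (hvar : Summable (fun i : ℕ => (i : ℝ) ^ 2 * μ i)) :
    let σ2 : ℝ := (∑' i : ℕ, (i : ℝ) ^ 2 * μ i) - 1
    let mubar : ℕ → ℝ := fun k => ∑' i : ℕ, μ (k + i)
    let m2Z : ℝ := ∑' i : ℕ, μ (2 * i)
    let m2N : ℝ := ∑' i : ℕ, μ (2 * (i + 1))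
    let A : ℝ := ∑' i : ℕ, (i : ℝ) * mubar (2 * i + 1)
    let B : ℝ := ∑' i : ℕ, (i : ℝ) * mubar (2 * i)
    let C : ℝ := ∑' i : ℕ, (i : ℝ) * mubar (2 * i + 2)
    ((A + B) * m2Z + (A + C) * m2N) / (m2Z + m2N)
      = (1 / 4) * (σ2 + μ 0 * m2Z / (2 * m2Z - μ 0)) := by
  intro σ2 mubar m2Z m2N A B C
  have hAB : 4 * (A + B) = σ2 + m2Z :=
    four_mul_tsum_tail_odd_add_even hnn hsum hmean hvar
  have hAC : 4 * (A + C) = σ2 - m2Z :=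
    four_mul_tsum_tail_odd_add_even_succ hnn hsum hmean hvar
  have hZ : m2Z = μ 0 + m2N :=
    ((summable_of_tsum_ne_zero (hsum ▸ one_ne_zero)).comp_injective
      (mul_right_injective₀ two_ne_zero)).tsum_eq_zero_add
  have hD : m2Z + m2N ≠ 0 :=
    (add_pos_of_pos_of_nonneg (tsum_two_mul_pos hnn h1 hsum hmean) (tsum_nonneg fun i => hnn _)).ne'
  rw [show 2 * m2Z - μ 0 = m2Z + m2N by linarith]
  field_simp
  linear_combination m2Z * hAB + m2N * hAC + m2Z * hZ
end

section
/- Let μ be a critical probability distribution on {0,2,3,...} with finite variance σ². Then Σ_{i≥0} i·μ̄_{2i+1} + Σ_{i≥0} i·μ̄_{2i} = (σ² + μ_{2Z})/4. -/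
/-!
Grouping the indices `2i` and `2i + 1` turns the left-hand side into `∑ₙ ⌊n/2⌋ μ̄ₙ`.
Exchanging the order of summation gives `∑ⱼ μⱼ ∑_{n ≤ j} ⌊n/2⌋ = ∑ⱼ μⱼ ⌊j²/4⌋`, and
`4 ⌊j²/4⌋ = j² - (j mod 2)`, where `∑ⱼ (j mod 2) μⱼ = 1 - μ_{2ℤ}`. Since `⌊j²/4⌋ ≤ j²`,
summability of `j² μⱼ` makes every series involved absolutely convergent.
-/

open Finset

section Tail

variable {M : Type*} [AddCommMonoid M] [TopologicalSpace M]

theorem hasSum_ite_le_range (g : ℕ → M) (j : ℕ) :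
    HasSum (fun n => if n ≤ j then g n else 0) (∑ n ∈ range (j + 1), g n) := by
  rw [← sum_congr rfl fun n hn => if_pos (Nat.lt_succ_iff.1 (mem_range.1 hn))]
  exact hasSum_sum_of_ne_finset_zero fun n hn => if_neg (by simpa [Nat.lt_succ_iff] using hn)

theorem hasSum_ite_le_iff {f : ℕ → M} {n : ℕ} {s : M} :
    HasSum (fun j => if n ≤ j then f j else 0) s ↔ HasSum (fun k => f (n + k)) s := by
  rw [← (add_right_injective n).hasSum_iff]
  · simp [Function.comp_def]
  · rintro j hj
    exact if_neg fun hnj => hj ⟨j - n, by simp; omega⟩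

end Tail

/-- Both sides are sums of `a n * f j` over the pairs `n ≤ j`, grouped by `n` on the left
and by `j` on the right. -/
theorem hasSum_mul_tsum_nat_add {a f : ℕ → ℝ}
    (h : Summable fun j => (∑ n ∈ range (j + 1), |a n|) * |f j|) :
    HasSum (fun n => a n * ∑' k, f (n + k)) (∑' j, (∑ n ∈ range (j + 1), a n) * f j) := by
  set F : ℕ × ℕ → ℝ := fun p => if p.2 ≤ p.1 then a p.2 * f p.1 else 0
  have hrow_abs (j : ℕ) :
      HasSum (fun n => |F (j, n)|) ((∑ n ∈ range (j + 1), |a n|) * |f j|) := by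
    rw [sum_mul]
    convert hasSum_ite_le_range (fun n => |a n| * |f j|) j using 2 with n
    split_ifs <;> simp [F, *, abs_mul]
  have hF : Summable F := by
    rw [← summable_abs_iff]
    refine (summable_prod_of_nonneg fun _ => abs_nonneg _).2
      ⟨fun j => (hrow_abs j).summable, ?_⟩
    simpa only [fun j => (hrow_abs j).tsum_eq] using h
  have hrows : HasSum (fun j => (∑ n ∈ range (j + 1), a n) * f j) (∑' p, F p) :=
    hF.hasSum.prod_fiberwise fun j => by
      simpa [F, sum_mul] using hasSum_ite_le_range (fun n => a n * f j) j
  rw [hrows.tsum_eq]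
  refine ((Equiv.prodComm _ _).hasSum_iff.2 hF.hasSum).prod_fiberwise fun n => ?_
  have hcol : Summable fun k => a n * f (n + k) :=
    (hasSum_ite_le_iff.1 (hF.prod_symm.prod_factor n).hasSum).summable
  simpa [F, hasSum_ite_le_iff, tsum_mul_left] using hcol.hasSum

theorem four_mul_sum_range_div_two_add_mod_two (j : ℕ) :
    4 * ∑ n ∈ range (j + 1), n / 2 + j % 2 = j ^ 2 := by
  induction j with
  | zero => simp
  | succ j ih =>
    rw [sum_range_succ, add_sq]
    generalize j ^ 2 = q at ih ⊢
    generalize ∑ n ∈ range (j + 1), n / 2 = s at ih ⊢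
    omega

theorem hasSum_mod_two_mul {μ : ℕ → ℝ} (hμ : Summable μ) :
    HasSum (fun j => ((j % 2 : ℕ) : ℝ) * μ j) ((∑' i : ℕ, μ i) - ∑' i : ℕ, μ (2 * i)) := by
  have heven : Summable fun k => μ (2 * k) :=
    hμ.comp_injective (mul_right_injective₀ (two_ne_zero (α := ℕ)))
  have hodd : Summable fun k => μ (2 * k + 1) :=
    hμ.comp_injective ((add_left_injective 1).comp (mul_right_injective₀ (two_ne_zero (α := ℕ))))
  rw [← tsum_even_add_odd heven hodd, add_sub_cancel_left, ← zero_add (∑' i, _)]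
  refine HasSum.even_add_odd ?_ ?_
  · simp
  · simpa [Nat.add_mod] using hodd.hasSum

theorem tsum_mul_odd_add_tsum_mul_even {g : ℕ → ℝ}
    (hg : Summable fun n => ((n / 2 : ℕ) : ℝ) * g n) :
    (∑' i : ℕ, (i : ℝ) * g (2 * i + 1)) + ∑' i : ℕ, (i : ℝ) * g (2 * i)
      = ∑' n : ℕ, ((n / 2 : ℕ) : ℝ) * g n := by
  have heven (i : ℕ) : 2 * i / 2 = i := by omega
  have hodd (i : ℕ) : (2 * i + 1) / 2 = i := by omega
  have hg_even : Summable fun i => ((2 * i / 2 : ℕ) : ℝ) * g (2 * i) :=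
    hg.comp_injective (mul_right_injective₀ (two_ne_zero (α := ℕ)))
  have hg_odd : Summable fun i => (((2 * i + 1) / 2 : ℕ) : ℝ) * g (2 * i + 1) :=
    hg.comp_injective ((add_left_injective 1).comp (mul_right_injective₀ (two_ne_zero (α := ℕ))))
  rw [add_comm, ← tsum_even_add_odd (f := fun n => ((n / 2 : ℕ) : ℝ) * g n) hg_even hg_odd]
  simp only [heven, hodd]

theorem stmt_1_general (μ : ℕ → ℝ)
    (hsum : ∑' i : ℕ, μ i = 1)
    (hvar : Summable (fun i : ℕ => (i : ℝ) ^ 2 * μ i)) :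
    let σ2 : ℝ := (∑' i : ℕ, (i : ℝ) ^ 2 * μ i) - 1
    let mubar : ℕ → ℝ := fun k => ∑' i : ℕ, μ (k + i)
    let m2Z : ℝ := ∑' i : ℕ, μ (2 * i)
    (∑' i : ℕ, (i : ℝ) * mubar (2 * i + 1)) + (∑' i : ℕ, (i : ℝ) * mubar (2 * i))
      = (σ2 + m2Z) / 4 := by
  intro σ2 mubar m2Z
  have hμ : Summable μ := by
    by_contra h
    simp [tsum_eq_zero_of_not_summable h] at hsum
  have hweight (j : ℕ) :
      ∑ n ∈ range (j + 1), ((n / 2 : ℕ) : ℝ) = ((j : ℝ) ^ 2 - ((j % 2 : ℕ) : ℝ)) / 4 := by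
    rw [eq_div_iff four_ne_zero, eq_sub_iff_add_eq, mul_comm]
    exact_mod_cast four_mul_sum_range_div_two_add_mod_two j
  have hdom : Summable fun j => (∑ n ∈ range (j + 1), |((n / 2 : ℕ) : ℝ)|) * |μ j| := by
    refine hvar.abs.of_nonneg_of_le (fun j => by positivity) fun j => ?_
    simp only [Nat.abs_cast, hweight, abs_mul, abs_pow]
    gcongr
    linarith [(Nat.cast_nonneg _ : (0 : ℝ) ≤ ((j % 2 : ℕ) : ℝ)), sq_nonneg (j : ℝ)]
  have hweighted : HasSum (fun j => (∑ n ∈ range (j + 1), ((n / 2 : ℕ) : ℝ)) * μ j)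
      ((∑' i : ℕ, (i : ℝ) ^ 2 * μ i - (∑' i : ℕ, μ i - m2Z)) / 4) := by
    have hterm : (fun j => (∑ n ∈ range (j + 1), ((n / 2 : ℕ) : ℝ)) * μ j)
        = fun j : ℕ => ((j : ℝ) ^ 2 * μ j - ((j % 2 : ℕ) : ℝ) * μ j) / 4 := by
      ext j
      rw [hweight]
      ring
    rw [hterm]
    exact (hvar.hasSum.sub (hasSum_mod_two_mul hμ)).div_const 4
  have htail := hasSum_mul_tsum_nat_add hdom
  rw [tsum_mul_odd_add_tsum_mul_even htail.summable, htail.tsum_eq, hweighted.tsum_eq, hsum]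
  ring

/-- First identity in the proof of Lemma 7:
`Σ_{i≥0} i·μ̄_{2i+1} + Σ_{i≥0} i·μ̄_{2i} = (σ² + μ_{2Z})/4`. -/
theorem stmt_1 (μ : ℕ → ℝ) (hnn : ∀ i, 0 ≤ μ i) (h1 : μ 1 = 0)
    (hsum : ∑' i : ℕ, μ i = 1) (hmean : ∑' i : ℕ, (i : ℝ) * μ i = 1)
    (hvar : Summable (fun i : ℕ => (i : ℝ) ^ 2 * μ i)) :
    let σ2 : ℝ := (∑' i : ℕ, (i : ℝ) ^ 2 * μ i) - 1
    let mubar : ℕ → ℝ := fun k => ∑' i : ℕ, μ (k + i)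
    let m2Z : ℝ := ∑' i : ℕ, μ (2 * i)
    (∑' i : ℕ, (i : ℝ) * mubar (2 * i + 1)) + (∑' i : ℕ, (i : ℝ) * mubar (2 * i))
      = (σ2 + m2Z) / 4 :=
  stmt_1_general μ hsum hvar
end

section
/- Let μ be a critical probability distribution on {0,2,3,...} with finite variance σ². Then Σ_{i≥0} i·μ̄_{2i+1} + Σ_{i≥0} i·μ̄_{2i+2} = (σ² − μ_{2Z})/4. -/
/-!
Swapping the order of summation (legitimate since everything is nonnegative) turns
`Σ_j a_j μ̄_{j+1}` into `Σ_n (Σ_{j<n} a_j) μ_n`. The two series on the left are the even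
and odd terms of `Σ_j ⌊j/2⌋ μ̄_{j+1}`, and `4 Σ_{j<n} ⌊j/2⌋ = n² - 2n + 1 - [n even]`, so the
left side equals `(Σ n² μ_n - 2 Σ n μ_n + Σ μ_n - μ_{2Z}) / 4`.
-/

open Finset

theorem summable_of_tsum_ne_zero_s2 {α β : Type*} [AddCommMonoid α] [TopologicalSpace α]
    {f : β → α} (h : ∑' b, f b ≠ 0) : Summable f :=
  by_contra fun hf => h (tsum_eq_zero_of_not_summable hf)

theorem hasSum_ite_even {M : Type*} [AddCommMonoid M] [TopologicalSpace M] [ContinuousAdd M]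
    {f : ℕ → M} {m : M} (hf : HasSum (fun k => f (2 * k)) m) :
    HasSum (fun n => if Even n then f n else 0) m := by
  have heven : HasSum (fun k => if Even (2 * k) then f (2 * k) else 0) m := by
    simpa only [even_two_mul, if_true] using hf
  have hodd : HasSum (fun k => if Even (2 * k + 1) then f (2 * k + 1) else 0) 0 := by
    simpa only [Nat.not_even_two_mul_add_one, if_false] using hasSum_zero
  simpa only [add_zero] using
    HasSum.even_add_odd (f := fun n => if Even n then f n else 0) heven hodd

theorem tsum_div_two_mul_succ {ν : ℕ → ℝ}
    (hs : Summable fun j => ((j / 2 : ℕ) : ℝ) * ν (j + 1)) :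
    ∑' j, ((j / 2 : ℕ) : ℝ) * ν (j + 1)
      = ∑' i : ℕ, (i : ℝ) * ν (2 * i + 1) + ∑' i : ℕ, (i : ℝ) * ν (2 * i + 2) := by
  have hinj : Function.Injective fun k : ℕ => 2 * k := mul_right_injective₀ two_ne_zero
  rw [← tsum_even_add_odd (f := fun j => ((j / 2 : ℕ) : ℝ) * ν (j + 1))
    (hs.comp_injective hinj) (hs.comp_injective ((add_left_injective 1).comp hinj))]
  congr 1 <;> refine tsum_congr fun k => ?_
  · rw [Nat.mul_div_cancel_left k two_pos]
  · rw [show (2 * k + 1) / 2 = k by omega]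

theorem four_mul_sum_range_div_two_add (n : ℕ) :
    4 * ∑ j ∈ range n, j / 2 + 2 * n = n ^ 2 + n % 2 := by
  induction n with
  | zero => simp
  | succ n ih =>
    rw [sum_range_succ]
    have := Nat.div_add_mod n 2
    rcases Nat.mod_two_eq_zero_or_one n with h | h
    · rw [h] at ih this
      rw [Nat.succ_mod_two_eq_one_iff.2 h]
      nlinarith
    · rw [h] at ih this
      rw [Nat.succ_mod_two_eq_zero_iff.2 h]
      nlinarith

theorem sum_range_div_two_mul (n : ℕ) (x : ℝ) :
    (∑ j ∈ range n, ((j / 2 : ℕ) : ℝ)) * x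
      = ((n : ℝ) ^ 2 * x - 2 * ((n : ℝ) * x) + x - if Even n then x else 0) / 4 := by
  have h := congrArg (Nat.cast : ℕ → ℝ) (four_mul_sum_range_div_two_add n)
  push_cast at h
  split_ifs with hn
  · rw [Nat.even_iff.1 hn] at h
    linear_combination (x / 4) * h
  · rw [Nat.odd_iff.1 (Nat.not_even_iff_odd.1 hn)] at h
    linear_combination (x / 4) * h

theorem hasSum_mul_tsum_tail {a μ : ℕ → ℝ} (ha : 0 ≤ a) (hμ : 0 ≤ μ) (hμs : Summable μ)
    (hs : Summable fun n => (∑ j ∈ range n, a j) * μ n) :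
    HasSum (fun j => a j * ∑' i, μ (j + 1 + i)) (∑' n, (∑ j ∈ range n, a j) * μ n) := by
  set F : ℕ × ℕ → ℝ := fun p => if p.1 < p.2 then a p.1 * μ p.2 else 0
  have hF : 0 ≤ F := fun p => by
    dsimp only [F]
    split_ifs
    exacts [mul_nonneg (ha _) (hμ _), le_rfl]
  have hcol : ∀ n, HasSum (fun j => F (j, n)) ((∑ j ∈ range n, a j) * μ n) := by
    intro n
    rw [sum_mul]
    have : HasSum (fun j => F (j, n)) (∑ j ∈ range n, F (j, n)) :=
      hasSum_sum_of_ne_finset_zero fun j hj => if_neg (mem_range.not.1 hj)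
    rwa [sum_congr rfl fun j hj => if_pos (mem_range.1 hj)] at this
  have hrow : ∀ j, HasSum (fun n => F (j, n)) (a j * ∑' i, μ (j + 1 + i)) := by
    intro j
    have hinj : Function.Injective (fun i => j + 1 + i) := add_right_injective _
    have hshift : (fun n => F (j, n)) ∘ (fun i => j + 1 + i) = fun i => a j * μ (j + 1 + i) :=
      funext fun i => if_pos (show j < j + 1 + i by omega)
    rw [← hinj.hasSum_iff, hshift]
    · exact (hμs.comp_injective hinj).hasSum.mul_left (a j)
    · intro n hn
      exact if_neg fun h => hn ⟨n - (j + 1), show j + 1 + (n - (j + 1)) = n by omega⟩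
  have hFs : Summable F := by
    refine Summable.prod_symm (f := fun p => F p.swap) ?_
    refine (summable_prod_of_nonneg (f := fun p => F p.swap) fun p => hF p.swap).2
      ⟨fun n => (hcol n).summable, ?_⟩
    simpa [(hcol _).tsum_eq] using hs
  refine HasSum.prod_fiberwise ?_ hrow
  rw [(hFs.prod_symm.hasSum.prod_fiberwise hcol).tsum_eq]
  exact ((Equiv.prodComm ℕ ℕ).tsum_eq F).symm ▸ hFs.hasSum

theorem stmt_2_general (μ : ℕ → ℝ) (hnn : ∀ i, 0 ≤ μ i)
    (hsum : ∑' i : ℕ, μ i = 1) (hmean : ∑' i : ℕ, (i : ℝ) * μ i = 1)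
    (hvar : Summable (fun i : ℕ => (i : ℝ) ^ 2 * μ i)) :
    let σ2 : ℝ := (∑' i : ℕ, (i : ℝ) ^ 2 * μ i) - 1
    let mubar : ℕ → ℝ := fun k => ∑' i : ℕ, μ (k + i)
    let m2Z : ℝ := ∑' i : ℕ, μ (2 * i)
    (∑' i : ℕ, (i : ℝ) * mubar (2 * i + 1)) + (∑' i : ℕ, (i : ℝ) * mubar (2 * i + 2))
      = (σ2 - m2Z) / 4 := by
  intro σ2 mubar m2Z
  have hμs : Summable μ := summable_of_tsum_ne_zero_s2 (hsum ▸ one_ne_zero)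
  have hmom : Summable fun i : ℕ => (i : ℝ) * μ i :=
    summable_of_tsum_ne_zero_s2 (hmean ▸ one_ne_zero)
  have heven : HasSum (fun n => if Even n then μ n else 0) m2Z :=
    hasSum_ite_even (hμs.comp_injective (mul_right_injective₀ two_ne_zero)).hasSum
  have hweighted :
      HasSum (fun n => (∑ j ∈ range n, ((j / 2 : ℕ) : ℝ)) * μ n) ((σ2 - m2Z) / 4) := by
    have h := (((hvar.hasSum.sub (hmom.hasSum.mul_left 2)).add hμs.hasSum).sub heven).div_const 4
    rw [← funext fun n => sum_range_div_two_mul n (μ n), hmean, hsum] at h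
    rw [show (σ2 - m2Z) / 4 = (∑' n : ℕ, (n : ℝ) ^ 2 * μ n - 2 * 1 + 1 - m2Z) / 4 by ring]
    exact h
  have hswap := hasSum_mul_tsum_tail (fun j => Nat.cast_nonneg (α := ℝ) (j / 2)) hnn hμs
    hweighted.summable
  calc _ = ∑' j, ((j / 2 : ℕ) : ℝ) * mubar (j + 1) :=
        (tsum_div_two_mul_succ (ν := mubar) hswap.summable).symm
    _ = (σ2 - m2Z) / 4 := hswap.tsum_eq.trans hweighted.tsum_eq

/-- Second identity in the proof of Lemma 7:
`Σ_{i≥0} i·μ̄_{2i+1} + Σ_{i≥0} i·μ̄_{2i+2} = (σ² − μ_{2Z})/4`. -/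
theorem stmt_2 (μ : ℕ → ℝ) (hnn : ∀ i, 0 ≤ μ i) (h1 : μ 1 = 0)
    (hsum : ∑' i : ℕ, μ i = 1) (hmean : ∑' i : ℕ, (i : ℝ) * μ i = 1)
    (hvar : Summable (fun i : ℕ => (i : ℝ) ^ 2 * μ i)) :
    let σ2 : ℝ := (∑' i : ℕ, (i : ℝ) ^ 2 * μ i) - 1
    let mubar : ℕ → ℝ := fun k => ∑' i : ℕ, μ (k + i)
    let m2Z : ℝ := ∑' i : ℕ, μ (2 * i)
    (∑' i : ℕ, (i : ℝ) * mubar (2 * i + 1)) + (∑' i : ℕ, (i : ℝ) * mubar (2 * i + 2))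
      = (σ2 - m2Z) / 4 :=
  stmt_2_general μ hnn hsum hmean hvar
end

section
/- Let μ be a critical probability distribution on {0,2,3,...} and let (G,D) be an ℕ²-valued random pair with P(G = a, D = b) = μ_{a+b+1} for all a,b ∈ ℕ. Then for every i ∈ ℕ: P(D = i and D ≤ G) = μ̄_{2i+1}; P(G + 1 = i and D > G + 1) = μ̄_{2i+1} if i ≥ 1 and 0 if i = 0; P(D = i and D = G + 1) = μ_{2i} if i ≥ 1 and 0 if i = 0; P(D = i and D < G) = μ̄_{2i+2}; and P(D = i and D = G) = μ_{2i+1}. -/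
/-!
Every event in question is a single point or a ray `{(a + j, b)}` / `{(a, b + j)}` in the lattice
of values of `(G, D)`; along such a ray `a + b + 1` runs through an interval of integers, so its
probability is a single `μ_n` or a tail `μ̄_n`.
-/

open MeasureTheory Function

section PairLaw

variable {Ω : Type*} [MeasurableSpace Ω] (ℙ : Measure Ω) [IsFiniteMeasure ℙ] {G D : Ω → ℕ}

lemma toReal_measure_pair_mem_range (hG : Measurable G) (hD : Measurable D) {p : ℕ → ℕ × ℕ}
    (hp : Injective p) :
    (ℙ {ω | (G ω, D ω) ∈ Set.range p}).toReal =
      ∑' j, (ℙ {ω | G ω = (p j).1 ∧ D ω = (p j).2}).toReal := by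
  have hunion : {ω | (G ω, D ω) ∈ Set.range p} = ⋃ j, (fun ω => (G ω, D ω)) ⁻¹' {p j} := by
    ext ω
    simp [eq_comm]
  rw [hunion, measure_iUnion, ENNReal.tsum_toReal_eq fun _ => measure_ne_top _ _]
  · simp only [Set.preimage, Set.mem_singleton_iff, Prod.ext_iff]
  · exact fun j k hjk => (Set.disjoint_singleton.2 (hp.ne hjk)).preimage _
  · exact fun j => (hG.prodMk hD) (measurableSet_singleton _)

variable {μ : ℕ → ℝ}

lemma toReal_measure_pair_mem_range_eq_tsum (hG : Measurable G) (hD : Measurable D)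
    (hjoint : ∀ a b : ℕ, (ℙ {ω | G ω = a ∧ D ω = b}).toReal = μ (a + b + 1))
    {p : ℕ → ℕ × ℕ} (hp : Injective p) :
    (ℙ {ω | (G ω, D ω) ∈ Set.range p}).toReal = ∑' j, μ ((p j).1 + (p j).2 + 1) := by
  rw [toReal_measure_pair_mem_range ℙ hG hD hp]
  exact tsum_congr fun j => hjoint _ _

lemma toReal_measure_le_and_eq (hG : Measurable G) (hD : Measurable D)
    (hjoint : ∀ a b : ℕ, (ℙ {ω | G ω = a ∧ D ω = b}).toReal = μ (a + b + 1)) (a b : ℕ) :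
    (ℙ {ω | a ≤ G ω ∧ D ω = b}).toReal = ∑' j, μ (a + b + 1 + j) := by
  have hray : {ω | a ≤ G ω ∧ D ω = b} = {ω | (G ω, D ω) ∈ Set.range fun j => (a + j, b)} := by
    ext ω
    simp only [Set.mem_ofPred_eq, Set.mem_range, Prod.ext_iff]
    exact ⟨fun ⟨_, hb⟩ => ⟨G ω - a, by omega, hb.symm⟩, fun ⟨_, _, hb⟩ => ⟨by omega, hb.symm⟩⟩
  rw [hray, toReal_measure_pair_mem_range_eq_tsum ℙ hG hD hjoint]
  · exact tsum_congr fun j => congrArg μ (by omega)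
  · exact fun j k h => by simpa using h

lemma toReal_measure_eq_and_le (hG : Measurable G) (hD : Measurable D)
    (hjoint : ∀ a b : ℕ, (ℙ {ω | G ω = a ∧ D ω = b}).toReal = μ (a + b + 1)) (a b : ℕ) :
    (ℙ {ω | G ω = a ∧ b ≤ D ω}).toReal = ∑' j, μ (a + b + 1 + j) := by
  have hray : {ω | G ω = a ∧ b ≤ D ω} = {ω | (G ω, D ω) ∈ Set.range fun j => (a, b + j)} := by
    ext ω
    simp only [Set.mem_ofPred_eq, Set.mem_range, Prod.ext_iff]
    exact ⟨fun ⟨ha, _⟩ => ⟨D ω - b, ha.symm, by omega⟩, fun ⟨_, ha, _⟩ => ⟨ha.symm, by omega⟩⟩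
  rw [hray, toReal_measure_pair_mem_range_eq_tsum ℙ hG hD hjoint]
  · exact tsum_congr fun j => congrArg μ (by omega)
  · exact fun j k h => by simpa using h

end PairLaw

theorem stmt_6_general {Ω : Type*} [MeasurableSpace Ω] (ℙ : Measure Ω) [IsProbabilityMeasure ℙ]
    (μ : ℕ → ℝ)
    (G D : Ω → ℕ) (hGmeas : Measurable G) (hDmeas : Measurable D)
    (hjoint : ∀ a b : ℕ, (ℙ {ω | G ω = a ∧ D ω = b}).toReal = μ (a + b + 1)) :
    let mubar : ℕ → ℝ := fun k => ∑' i : ℕ, μ (k + i)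
    ∀ i : ℕ,
      ((ℙ {ω | D ω = i ∧ D ω ≤ G ω}).toReal = mubar (2 * i + 1)) ∧
      ((ℙ {ω | G ω + 1 = i ∧ G ω + 1 < D ω}).toReal = if 1 ≤ i then mubar (2 * i + 1) else 0) ∧
      ((ℙ {ω | D ω = i ∧ D ω = G ω + 1}).toReal = if 1 ≤ i then μ (2 * i) else 0) ∧
      ((ℙ {ω | D ω = i ∧ D ω < G ω}).toReal = mubar (2 * i + 2)) ∧
      ((ℙ {ω | D ω = i ∧ D ω = G ω}).toReal = μ (2 * i + 1)) := by
  intro mubar i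
  have hcol := toReal_measure_le_and_eq ℙ hGmeas hDmeas hjoint
  have hrow := toReal_measure_eq_and_le ℙ hGmeas hDmeas hjoint
  have hempty : ∀ {s : Set Ω}, s = ∅ → (ℙ s).toReal = 0 := fun h => by simp [h]
  refine ⟨?_, ?_, ?_, ?_, ?_⟩
  · rw [show {ω | D ω = i ∧ D ω ≤ G ω} = {ω | i ≤ G ω ∧ D ω = i} by
      ext; simp only [Set.mem_ofPred_eq]; omega, hcol]
    simp only [mubar, two_mul]
  · rcases i with _ | k
    · exact hempty (Set.eq_empty_of_forall_notMem fun ω h => by simp at h)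
    rw [if_pos (Nat.le_add_left 1 k),
      show {ω | G ω + 1 = k + 1 ∧ G ω + 1 < D ω} = {ω | G ω = k ∧ k + 2 ≤ D ω} by
      ext; simp only [Set.mem_ofPred_eq]; omega, hrow]
    exact tsum_congr fun j => congrArg μ (by omega)
  · rcases i with _ | k
    · exact hempty (Set.eq_empty_of_forall_notMem fun ω h => by simp at h; omega)
    rw [if_pos (Nat.le_add_left 1 k),
      show {ω | D ω = k + 1 ∧ D ω = G ω + 1} = {ω | G ω = k ∧ D ω = k + 1} by
      ext; simp only [Set.mem_ofPred_eq]; omega, hjoint]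
    exact congrArg μ (by omega)
  · rw [show {ω | D ω = i ∧ D ω < G ω} = {ω | i + 1 ≤ G ω ∧ D ω = i} by
      ext; simp only [Set.mem_ofPred_eq]; omega, hcol]
    exact tsum_congr fun j => congrArg μ (by omega)
  · rw [show {ω | D ω = i ∧ D ω = G ω} = {ω | G ω = i ∧ D ω = i} by
      ext; simp only [Set.mem_ofPred_eq]; omega, hjoint, two_mul]

/-- The transition probabilities of Section 3.2: if `(G,D)` has joint law
`P(G=a, D=b) = μ_{a+b+1}`, then the probabilities of the various comparison events
are given by tails of `μ`. -/
theorem stmt_6 {Ω : Type*} [MeasurableSpace Ω] (ℙ : Measure Ω) [IsProbabilityMeasure ℙ]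
    (μ : ℕ → ℝ) (hnn : ∀ i, 0 ≤ μ i) (h1 : μ 1 = 0)
    (hsum : ∑' i : ℕ, μ i = 1) (hmean : ∑' i : ℕ, (i : ℝ) * μ i = 1)
    (G D : Ω → ℕ) (hGmeas : Measurable G) (hDmeas : Measurable D)
    (hjoint : ∀ a b : ℕ, (ℙ {ω | G ω = a ∧ D ω = b}).toReal = μ (a + b + 1)) :
    let mubar : ℕ → ℝ := fun k => ∑' i : ℕ, μ (k + i)
    ∀ i : ℕ,
      ((ℙ {ω | D ω = i ∧ D ω ≤ G ω}).toReal = mubar (2 * i + 1)) ∧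
      ((ℙ {ω | G ω + 1 = i ∧ G ω + 1 < D ω}).toReal = if 1 ≤ i then mubar (2 * i + 1) else 0) ∧
      ((ℙ {ω | D ω = i ∧ D ω = G ω + 1}).toReal = if 1 ≤ i then μ (2 * i) else 0) ∧
      ((ℙ {ω | D ω = i ∧ D ω < G ω}).toReal = mubar (2 * i + 2)) ∧
      ((ℙ {ω | D ω = i ∧ D ω = G ω}).toReal = μ (2 * i + 1)) :=
  stmt_6_general ℙ μ G D hGmeas hDmeas hjoint
end

section
/- Let T be a finite tree (a finite connected acyclic simple graph) with n ≥ 2 vertices in which every vertex has degree 1 or degree at least 3, and regard its vertex set V as a metric space with the graph distance. Let L ⊆ V be the set of leaves (vertices of degree 1), with the induced metric. Then the Gromov–Hausdorff distance between the metric spaces L and V satisfies d_GH(L, V) ≤ ln(n)/ln(2). -/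
/-! Let `v` be a vertex and `k` the distance from `v` to a nearest leaf. Every vertex at distance
`i < k` from `v` has degree at least `3` and, since the tree has no cycles, at most one neighbour
closer to `v`; so it has at least two neighbours at distance `i + 1`, and no vertex is reached
from two different vertices at distance `i`. Hence the sphere of radius `i` around `v` has at
least `2 ^ i` vertices for `i ≤ k`, so `2 ^ k ≤ n`. Every vertex is therefore within `log₂ n` of
the set of leaves, which bounds the Hausdorff distance, and with it `d_GH`, between the leaves and
the whole vertex set. -/

open Finset

namespace SimpleGraph

variable {V : Type*} {G : SimpleGraph V}

theorem IsAcyclic.eq_penultimate_of_adj_of_dist_lt (hG : G.IsAcyclic) {v u w : V}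
    {p : G.Walk v u} (hp : p.IsPath) (hadj : G.Adj u w) (hw : G.Reachable v w)
    (hd : G.dist v w < G.dist v u) : w = p.penultimate := by
  classical
  obtain ⟨q, hq, hql⟩ := hw.exists_path_of_dist
  have hu : u ∉ q.support := fun hu =>
    hd.not_ge <| hql ▸ (G.dist_le (q.takeUntil u hu)).trans (q.length_takeUntil_le_length hu)
  exact hG.eq_penultimate_of_adj_end hp hadj
    (hG.mem_support_of_ne_mem_support_of_adj_of_isPath hp hq hadj hu)

theorem IsTree.eq_of_adj_of_dist_lt (hG : G.IsTree) {v u w₁ w₂ : V} (h₁ : G.Adj u w₁)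
    (h₂ : G.Adj u w₂) (hd₁ : G.dist v w₁ < G.dist v u) (hd₂ : G.dist v w₂ < G.dist v u) :
    w₁ = w₂ := by
  obtain ⟨p, hp, -⟩ := (hG.connected v u).exists_path_of_dist
  exact (hG.isAcyclic.eq_penultimate_of_adj_of_dist_lt hp h₁ (hG.connected v w₁) hd₁).trans
    (hG.isAcyclic.eq_penultimate_of_adj_of_dist_lt hp h₂ (hG.connected v w₂) hd₂).symm

section Finite

variable [Fintype V] [DecidableRel G.Adj]

theorem IsTree.degree_le_card_filter_dist_eq_add_one (hG : G.IsTree) (v u : V) :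
    G.degree u ≤ #{w ∈ G.neighborFinset u | G.dist v w = G.dist v u + 1} + 1 := by
  have hcloser : ∀ w, G.Adj u w → G.dist v w ≠ G.dist v u + 1 → G.dist v w < G.dist v u :=
    fun w hadj hne => by have := hG.dist_eq_dist_add_one_of_adj v hadj; omega
  have hparent : #{w ∈ G.neighborFinset u | ¬G.dist v w = G.dist v u + 1} ≤ 1 := by
    refine card_le_one.2 fun a ha b hb => ?_
    simp only [mem_filter, mem_neighborFinset] at ha hb
    exact hG.eq_of_adj_of_dist_lt ha.1 hb.1 (hcloser a ha.1 ha.2) (hcloser b hb.1 hb.2)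
  rw [← card_neighborFinset_eq_degree,
    ← card_filter_add_card_filter_not (fun w => G.dist v w = G.dist v u + 1)]
  omega

theorem IsTree.two_mul_card_dist_eq_le (hG : G.IsTree) (v : V) (i : ℕ)
    (hdeg : ∀ u, G.dist v u = i → 3 ≤ G.degree u) :
    2 * #{u | G.dist v u = i} ≤ #{u | G.dist v u = i + 1} := by
  have hcount := card_mul_le_card_mul G.Adj (s := {u | G.dist v u = i})
    (t := {u | G.dist v u = i + 1}) (m := 2) (n := 1) ?_ ?_
  · omega
  · intro u hu
    rw [mem_filter_univ] at hu
    have hchildren : {w ∈ G.neighborFinset u | G.dist v w = G.dist v u + 1} ⊆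
        bipartiteAbove G.Adj {u | G.dist v u = i + 1} u := fun w hw => by
      simp only [mem_filter, mem_neighborFinset] at hw
      simp [mem_bipartiteAbove, hw.1, hw.2, hu]
    have := hG.degree_le_card_filter_dist_eq_add_one v u
    have := card_le_card hchildren
    have := hdeg u hu
    omega
  · intro w hw
    rw [mem_filter_univ] at hw
    refine card_le_one.2 fun a ha b hb => ?_
    simp only [mem_bipartiteBelow, mem_filter_univ] at ha hb
    exact hG.eq_of_adj_of_dist_lt (v := v) ha.2.symm hb.2.symm (by omega) (by omega)

theorem IsTree.two_pow_le_card_dist_eq (hG : G.IsTree) (v : V) {k : ℕ}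
    (hdeg : ∀ u, G.dist v u < k → 3 ≤ G.degree u) :
    ∀ i ≤ k, 2 ^ i ≤ #{u | G.dist v u = i}
  | 0, _ => card_pos.2 ⟨v, by simp⟩
  | i + 1, hi =>
    calc 2 ^ (i + 1) = 2 * 2 ^ i := pow_succ' 2 i
      _ ≤ 2 * #{u | G.dist v u = i} := by
        gcongr; exact hG.two_pow_le_card_dist_eq v hdeg i (by omega)
      _ ≤ #{u | G.dist v u = i + 1} :=
        hG.two_mul_card_dist_eq_le v i fun u hu => hdeg u (by omega)

theorem IsTree.exists_degree_eq_one_two_pow_dist_le_card (hG : G.IsTree)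
    (hdeg : ∀ u, G.degree u = 1 ∨ 3 ≤ G.degree u) (hleaf : ∃ ℓ, G.degree ℓ = 1) (v : V) :
    ∃ ℓ, G.degree ℓ = 1 ∧ 2 ^ G.dist v ℓ ≤ Fintype.card V := by
  obtain ⟨ℓ, hℓ, hmin⟩ := exists_min_image {u | G.degree u = 1} (G.dist v)
    (by simpa [Finset.Nonempty] using hleaf)
  rw [mem_filter_univ] at hℓ
  have hinner : ∀ u, G.dist v u < G.dist v ℓ → 3 ≤ G.degree u := fun u hu =>
    (hdeg u).resolve_left fun hu₁ => hu.not_ge (hmin u ((mem_filter_univ u).2 hu₁))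
  exact ⟨ℓ, hℓ, (hG.two_pow_le_card_dist_eq v hinner _ le_rfl).trans (card_le_univ _)⟩

end Finite

end SimpleGraph

theorem GromovHausdorff.ghDist_subtype_le {X : Type*} [MetricSpace X] [CompactSpace X]
    [Nonempty X] {p : X → Prop} [Nonempty (Subtype p)] [CompactSpace (Subtype p)] {r : ℝ}
    (h : ∀ x, ∃ y, p y ∧ dist x y ≤ r) : ghDist (Subtype p) X ≤ r := by
  have hr : 0 ≤ r := by
    obtain ⟨y, -, hy⟩ := h (Classical.arbitrary X)
    exact dist_nonneg.trans hy
  refine (ghDist_le_hausdorffDist isometry_subtype_coe isometry_id).trans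
    (Metric.hausdorffDist_le_of_mem_dist hr ?_ ?_)
  · rintro _ ⟨y, rfl⟩
    exact ⟨y, ⟨y, rfl⟩, by simpa using hr⟩
  · rintro _ ⟨x, rfl⟩
    obtain ⟨y, hy, hxy⟩ := h x
    exact ⟨y, ⟨⟨y, hy⟩, rfl⟩, hxy⟩

theorem stmt_11_general {V : Type*} [Fintype V] (G : SimpleGraph V)
    [DecidableRel G.Adj] [MetricSpace V] [Nonempty V]
    [Nonempty {v : V // G.degree v = 1}]
    (hmetric : ∀ v w : V, dist v w = (G.dist v w : ℝ))
    (n : ℕ) (hcard : Fintype.card V = n)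
    (hconn : G.Connected) (hacyclic : G.IsAcyclic)
    (hdeg : ∀ v : V, G.degree v = 1 ∨ 3 ≤ G.degree v) :
    GromovHausdorff.ghDist {v : V // G.degree v = 1} V ≤ Real.log n / Real.log 2 := by
  have hG : G.IsTree := ⟨hconn, hacyclic⟩
  obtain ⟨ℓ₀⟩ := ‹Nonempty {v : V // G.degree v = 1}›
  refine GromovHausdorff.ghDist_subtype_le fun x => ?_
  obtain ⟨ℓ, hℓ, hpow⟩ := hG.exists_degree_eq_one_two_pow_dist_le_card hdeg ⟨ℓ₀, ℓ₀.2⟩ x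
  refine ⟨ℓ, hℓ, ?_⟩
  rw [hmetric, le_div_iff₀ (Real.log_pos one_lt_two), ← Real.log_pow]
  exact Real.log_le_log (by positivity) (by exact_mod_cast hcard ▸ hpow)

/-- Inequality (12) of the paper: if the vertex set of a finite tree with `n ≥ 2`
vertices, all of whose vertices have degree `1` or at least `3`, is endowed with the
graph distance, then the Gromov–Hausdorff distance between the set of leaves and the
whole vertex set is at most `ln(n)/ln(2)`. -/
theorem stmt_11 {V : Type*} [Fintype V] [DecidableEq V] (G : SimpleGraph V)
    [DecidableRel G.Adj] [MetricSpace V] [Nonempty V]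
    [Nonempty {v : V // G.degree v = 1}]
    (hmetric : ∀ v w : V, dist v w = (G.dist v w : ℝ))
    (n : ℕ) (hcard : Fintype.card V = n) (hn : 2 ≤ n)
    (hconn : G.Connected) (hacyclic : G.IsAcyclic)
    (hdeg : ∀ v : V, G.degree v = 1 ∨ 3 ≤ G.degree v) :
    GromovHausdorff.ghDist {v : V // G.degree v = 1} V ≤ Real.log n / Real.log 2 :=
  stmt_11_general G hmetric n hcard hconn hacyclic hdeg
end

section
/- Let B be a nonempty subset of {2,3,4,...}. Then there exists a unique real number r ∈ (0,1) such that Σ_{i∈B} i·r^{i−1} = 1. Moreover, defining ν₀ = 1 − Σ_{i∈B} r^{i−1}, ν_i = r^{i−1} for i ∈ B, and ν_i = 0 for all other i ≥ 1, the sequence ν is a critical probability distribution: ν_i ≥ 0 for all i, Σ_{i≥0} ν_i = 1, and Σ_{i≥0} i·ν_i = 1. -/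
/-!
`F(x) = Σ_{i∈B} i x^{i-1}` is continuous and strictly increasing on `[0,1)`, vanishes at `0`
because `1 ∉ B`, and exceeds `1` near `x = 1` because a single term `i₀ x^{i₀-1}` tends to
`i₀ ≥ 2`; the intermediate value theorem gives the unique root `r` of `F = 1`.
Since every `i ∈ B` is at least `1`, `Σ_{i∈B} r^{i-1} ≤ F(r) = 1`, so `ν₀ ≥ 0`; the total mass
of `ν` is `1` by the choice of `ν₀`, and its mean is `F(r) = 1`.
-/

open Set Filter Topology

noncomputable def offspringMean (B : Set ℕ) (x : ℝ) : ℝ :=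
  ∑' i, B.indicator (fun i : ℕ => (i : ℝ) * x ^ (i - 1)) i

noncomputable def offspringMass (B : Set ℕ) (x : ℝ) : ℝ :=
  ∑' i, B.indicator (fun i : ℕ => x ^ (i - 1)) i

open Classical in
noncomputable def offspringDist (B : Set ℕ) (r : ℝ) (i : ℕ) : ℝ :=
  if i ∈ B then r ^ (i - 1) else if i = 0 then 1 - offspringMass B r else 0

section

variable {B : Set ℕ} {r : ℝ}

theorem summable_natCast_mul_pow_pred (hr0 : 0 ≤ r) (hr1 : r < 1) :
    Summable fun i : ℕ => (i : ℝ) * r ^ (i - 1) := by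
  rw [← summable_nat_add_iff 1]
  simpa using summable_choose_mul_geometric_of_norm_lt_one 1
    (by rwa [Real.norm_of_nonneg hr0] : ‖r‖ < 1)

theorem summable_offspringMean (B : Set ℕ) (hr0 : 0 ≤ r) (hr1 : r < 1) :
    Summable (B.indicator fun i : ℕ => (i : ℝ) * r ^ (i - 1)) :=
  (summable_natCast_mul_pow_pred hr0 hr1).indicator B

theorem summable_offspringMass (B : Set ℕ) (hr0 : 0 ≤ r) (hr1 : r < 1) :
    Summable (B.indicator fun i : ℕ => r ^ (i - 1)) := by
  refine Summable.indicator ?_ B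
  rw [← summable_nat_add_iff 1]
  simpa using summable_geometric_of_lt_one hr0 hr1

theorem strictMonoOn_offspringMean {i₀ : ℕ} (hi₀ : i₀ ∈ B) (h2 : 2 ≤ i₀) :
    StrictMonoOn (offspringMean B) (Ico 0 1) := by
  intro x hx y hy hxy
  refine Summable.tsum_lt_tsum (i := i₀) (fun i => Set.indicator_le_indicator ?_) ?_
    (summable_offspringMean B hx.1 hx.2) (summable_offspringMean B hy.1 hy.2)
  · have := hx.1
    gcongr
  · have := hx.1
    simp only [Set.indicator_of_mem hi₀]
    gcongr
    omega

theorem continuousOn_offspringMean (B : Set ℕ) {ρ : ℝ} (hρ0 : 0 ≤ ρ) (hρ1 : ρ < 1) :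
    ContinuousOn (offspringMean B) (Icc 0 ρ) := by
  refine continuousOn_tsum (fun i => ?_) (summable_offspringMean B hρ0 hρ1) fun i x hx => ?_
  · by_cases hi : i ∈ B <;> simp only [hi, Set.indicator_of_mem, Set.indicator_of_notMem,
      not_false_eq_true] <;> fun_prop
  · by_cases hi : i ∈ B
    · have := hx.1
      simp only [hi, Set.indicator_of_mem, Real.norm_eq_abs]
      rw [abs_of_nonneg (by positivity)]
      gcongr
      exact hx.2
    · simp [hi]

theorem offspringMean_zero (h1 : 1 ∉ B) : offspringMean B 0 = 0 := by
  refine (tsum_congr fun i => ?_).trans tsum_zero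
  rcases i with _ | _ | i
  · simp
  · simp [h1]
  · simp

theorem exists_one_lt_offspringMean {i₀ : ℕ} (hi₀ : i₀ ∈ B) (h2 : 2 ≤ i₀) :
    ∃ ρ ∈ Ioo 0 1, 1 < offspringMean B ρ := by
  have hlim : Tendsto (fun x : ℝ => (i₀ : ℝ) * x ^ (i₀ - 1)) (𝓝[<] 1) (𝓝 i₀) := by
    have hcont : Continuous fun x : ℝ => (i₀ : ℝ) * x ^ (i₀ - 1) := by fun_prop
    simpa using (hcont.tendsto 1).mono_left nhdsWithin_le_nhds
  have hi₀1 : (1 : ℝ) < i₀ := by exact_mod_cast h2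
  obtain ⟨ρ, hρ, hρ01⟩ :=
    ((hlim.eventually (lt_mem_nhds hi₀1)).and (Ioo_mem_nhdsLT zero_lt_one)).exists
  refine ⟨ρ, hρ01, hρ.trans_le ?_⟩
  have hle := (summable_offspringMean B hρ01.1.le hρ01.2).le_tsum i₀ fun j _ =>
    Set.indicator_nonneg (fun i _ => by have := hρ01.1.le; positivity) j
  rwa [Set.indicator_of_mem hi₀] at hle

theorem exists_offspringMean_eq_one {i₀ : ℕ} (hi₀ : i₀ ∈ B) (h2 : 2 ≤ i₀) (h1 : 1 ∉ B) :
    ∃ r ∈ Ioo 0 1, offspringMean B r = 1 := by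
  obtain ⟨ρ, hρ, hρ1⟩ := exists_one_lt_offspringMean hi₀ h2
  obtain ⟨r, hr, hr1⟩ := intermediate_value_Icc hρ.1.le (continuousOn_offspringMean B hρ.1.le hρ.2)
    (by rw [offspringMean_zero h1]; exact ⟨zero_le_one, hρ1.le⟩)
  refine ⟨r, ⟨hr.1.lt_of_ne ?_, hr.2.trans_lt hρ.2⟩, hr1⟩
  rintro rfl
  simp [offspringMean_zero h1] at hr1

theorem offspringMass_le_offspringMean (h0 : 0 ∉ B) (hr0 : 0 ≤ r) (hr1 : r < 1) :
    offspringMass B r ≤ offspringMean B r := by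
  refine Summable.tsum_le_tsum (fun i => ?_) (summable_offspringMass B hr0 hr1)
    (summable_offspringMean B hr0 hr1)
  by_cases hi : i ∈ B
  · simp only [hi, Set.indicator_of_mem]
    have hi1 : (1 : ℝ) ≤ i := by exact_mod_cast Nat.one_le_iff_ne_zero.2 fun h => h0 (h ▸ hi)
    exact le_mul_of_one_le_left (pow_nonneg hr0 _) hi1
  · simp [hi]

theorem offspringDist_nonneg (hr0 : 0 ≤ r) (hmass : offspringMass B r ≤ 1) (i : ℕ) :
    0 ≤ offspringDist B r i := by
  unfold offspringDist
  split_ifs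
  · positivity
  · linarith
  · exact le_rfl

theorem tsum_offspringDist (h0 : 0 ∉ B) (hr0 : 0 ≤ r) (hr1 : r < 1) :
    ∑' i, offspringDist B r i = 1 := by
  have hsplit : ∀ i, offspringDist B r i =
      B.indicator (fun i : ℕ => r ^ (i - 1)) i + if i = 0 then 1 - offspringMass B r else 0 := by
    intro i
    by_cases hi : i ∈ B
    · have : i ≠ 0 := fun h => h0 (h ▸ hi)
      simp [offspringDist, hi, this]
    · simp [offspringDist, hi]
  rw [tsum_congr hsplit, (summable_offspringMass B hr0 hr1).tsum_add
    (hasSum_ite_eq 0 _).summable, tsum_ite_eq, offspringMass]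
  ring

theorem tsum_natCast_mul_offspringDist (B : Set ℕ) (r : ℝ) :
    ∑' i : ℕ, (i : ℝ) * offspringDist B r i = offspringMean B r := by
  refine tsum_congr fun i => ?_
  by_cases hi : i ∈ B
  · simp [offspringDist, hi]
  · rcases i with _ | i <;> simp [offspringDist, hi]

end

open Classical in
/-- Section 5.2: for every nonempty set `B ⊆ {2,3,4,…}` there is a unique `r ∈ (0,1)`
with `Σ_{i∈B} i·r^{i−1} = 1`, and the associated sequence `ν` (with `ν₀ = 1 − Σ_{i∈B} r^{i−1}`,
`ν_i = r^{i−1}` for `i ∈ B`, `ν_i = 0` otherwise) is a critical probability distribution. -/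
theorem stmt_13 (B : Set ℕ) (hBne : B.Nonempty) (hB2 : ∀ i ∈ B, 2 ≤ i) :
    ∃ r ∈ Set.Ioo (0 : ℝ) 1,
      ((∑' i : ℕ, (if i ∈ B then (i : ℝ) * r ^ (i - 1) else 0)) = 1) ∧
      (∀ r' ∈ Set.Ioo (0 : ℝ) 1,
        (∑' i : ℕ, (if i ∈ B then (i : ℝ) * r' ^ (i - 1) else 0)) = 1 → r' = r) ∧
      (let ν : ℕ → ℝ := fun i =>
          if i ∈ B then r ^ (i - 1)
          else if i = 0 then 1 - ∑' j : ℕ, (if j ∈ B then r ^ (j - 1) else 0)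
          else 0;
        (∀ i, 0 ≤ ν i) ∧ (∑' i : ℕ, ν i = 1) ∧ (∑' i : ℕ, (i : ℝ) * ν i = 1)) := by
  obtain ⟨i₀, hi₀⟩ := hBne
  have h0 : 0 ∉ B := fun h => absurd (hB2 0 h) (by norm_num)
  have h1 : 1 ∉ B := fun h => absurd (hB2 1 h) (by norm_num)
  obtain ⟨r, hr, hmean⟩ := exists_offspringMean_eq_one hi₀ (hB2 i₀ hi₀) h1
  have hmass : offspringMass B r ≤ 1 := hmean ▸ offspringMass_le_offspringMean h0 hr.1.le hr.2
  refine ⟨r, hr, hmean, fun r' hr' hmean' => ?_, ?_⟩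
  · exact (strictMonoOn_offspringMean hi₀ (hB2 i₀ hi₀)).injOn (Ioo_subset_Ico_self hr')
      (Ioo_subset_Ico_self hr) (hmean'.trans hmean.symm)
  · exact ⟨offspringDist_nonneg hr.1.le hmass, tsum_offspringDist h0 hr.1.le hr.2,
      (tsum_natCast_mul_offspringDist B r).trans hmean⟩
end

section
/- Let μ be the probability distribution with μ₀ = 2 − √2, μ₁ = 0, and μ_i = ((2 − √2)/2)^{i−1} for every i ≥ 2. Then μ is a critical probability distribution (Σ_{i≥0} μ_i = 1 and Σ_{i≥0} i·μ_i = 1), and with σ² = Σ_{i≥0} i²·μ_i − 1, μ_{2Z} = Σ_{i≥0} μ_{2i}, c_tree(μ) = 2/(σ·√μ₀) and c_geo(μ) = (1/4)·(σ² + μ₀·μ_{2Z}/(2·μ_{2Z} − μ₀)), one has c_tree(μ)·c_geo(μ) = (1/7)·(3 + √2)·2^{3/4}. -/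
/-!
The law is `a` at `0`, nothing at `1` and the geometric tail `r ^ (i - 1)` from `2` on, so every
moment reduces to the sums `∑ (n + 1) ^ k r ^ n` for `k ≤ 2`, which are combinations of
`∑ (n + k).choose k * r ^ n = 1 / (1 - r) ^ (k + 1)`; the even-index mass is a geometric series
in `r ^ 2`. For `r = (2 - √2) / 2` one has `1 - r = 1 / √2`, which gives `σ² = 4 (√2 - 1)`,
`μ_{2ℤ} = (12 - 4√2) / 7`, `c_geo = (4√2 - 2) / 7` and `c_tree = 1 / ((√2 - 1) 2^{1/4})`;
the product simplifies with `√2² = 2` and `2^{1/4} 2^{3/4} = 2`.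
-/

open Finset

section MomentsOfGeometric

variable {𝕜 : Type*} [NormedField 𝕜] {r : 𝕜}

lemma hasSum_succ_mul_geometric_of_norm_lt_one (hr : ‖r‖ < 1) :
    HasSum (fun n : ℕ => ((n + 1 : ℕ) : 𝕜) * r ^ n) (1 / (1 - r) ^ 2) := by
  simpa using hasSum_choose_mul_geometric_of_norm_lt_one 1 hr

lemma hasSum_succ_sq_mul_geometric_of_norm_lt_one (hr : ‖r‖ < 1) :
    HasSum (fun n : ℕ => ((n + 1 : ℕ) : 𝕜) ^ 2 * r ^ n) ((1 + r) / (1 - r) ^ 3) := by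
  have hr1 : 1 - r ≠ 0 := sub_ne_zero.mpr fun h => by simp [← h] at hr
  have hsq : (fun n : ℕ => ((n + 1 : ℕ) : 𝕜) ^ 2 * r ^ n) =
      fun n => 2 * ((n + 2).choose 2 * r ^ n) - ((n + 1 : ℕ) : 𝕜) * r ^ n := by
    ext n
    have hchoose := congrArg (Nat.cast : ℕ → 𝕜) (Nat.add_one_mul_choose_eq (n + 1) 1)
    push_cast [Nat.choose_one_right] at hchoose ⊢
    linear_combination (r ^ n) * hchoose
  rw [hsq, show (1 + r) / (1 - r) ^ 3 = 2 * (1 / (1 - r) ^ (2 + 1)) - 1 / (1 - r) ^ 2 by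
    field_simp; ring]
  exact ((hasSum_choose_mul_geometric_of_norm_lt_one 2 hr).mul_left 2).sub
    (hasSum_succ_mul_geometric_of_norm_lt_one hr)

end MomentsOfGeometric

def geomTail {M : Type*} [MonoidWithZero M] (a r : M) (i : ℕ) : M :=
  if i = 0 then a else if i = 1 then 0 else r ^ (i - 1)

section GeomTail

variable {𝕜 : Type*} [NormedField 𝕜] {a r : 𝕜}

lemma hasSum_mul_geomTail {S : 𝕜} (f : ℕ → 𝕜)
    (hf : HasSum (fun n => f (n + 1) * r ^ n) S) :
    HasSum (fun i => f i * geomTail a r i) (f 0 * a + S - f 1) := by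
  have htail : (fun n => f (n + 2) * geomTail a r (n + 2)) =
      fun n => f (n + 1 + 1) * r ^ (n + 1) := by
    ext n
    simp [geomTail]
  have hhead : f 0 * a + S - f 1 - ∑ i ∈ range 2, f i * geomTail a r i =
      S - ∑ i ∈ range 1, f (i + 1) * r ^ i := by
    simp [sum_range_succ, geomTail]
    ring
  rw [← hasSum_nat_add_iff' 2, htail, hhead]
  exact (hasSum_nat_add_iff' 1).mpr hf

lemma hasSum_geomTail (hr : ‖r‖ < 1) : HasSum (geomTail a r) (a + 1 / (1 - r) - 1) := by
  simpa using hasSum_mul_geomTail (a := a) (fun _ => 1)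
    (by simpa using hasSum_geometric_of_norm_lt_one hr)

lemma hasSum_coe_mul_geomTail (hr : ‖r‖ < 1) :
    HasSum (fun i : ℕ => (i : 𝕜) * geomTail a r i) (1 / (1 - r) ^ 2 - 1) := by
  simpa using hasSum_mul_geomTail (a := a) (fun i : ℕ => (i : 𝕜))
    (hasSum_succ_mul_geometric_of_norm_lt_one hr)

lemma hasSum_coe_sq_mul_geomTail (hr : ‖r‖ < 1) :
    HasSum (fun i : ℕ => (i : 𝕜) ^ 2 * geomTail a r i) ((1 + r) / (1 - r) ^ 3 - 1) := by
  simpa using hasSum_mul_geomTail (a := a) (fun i : ℕ => (i : 𝕜) ^ 2)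
    (hasSum_succ_sq_mul_geometric_of_norm_lt_one hr)

lemma hasSum_geomTail_two_mul (hr : ‖r‖ < 1) :
    HasSum (fun i => geomTail a r (2 * i)) (a + r / (1 - r ^ 2)) := by
  have hr2 : ‖r ^ 2‖ < 1 := by
    rw [norm_pow]; exact pow_lt_one₀ (norm_nonneg r) hr two_ne_zero
  have heven : (fun n => geomTail a r (2 * (n + 1))) = fun n => r * (r ^ 2) ^ n := by
    ext n
    rw [show 2 * (n + 1) = 2 * n + 1 + 1 by ring]
    simp [geomTail, pow_succ', pow_mul]
  have hhead :
      a + r / (1 - r ^ 2) - ∑ i ∈ range 1, geomTail a r (2 * i) = r * (1 - r ^ 2)⁻¹ := by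
    simp [geomTail, div_eq_mul_inv]
  rw [← hasSum_nat_add_iff' 1, heven, hhead]
  exact (hasSum_geometric_of_norm_lt_one hr2).mul_left r

end GeomTail

noncomputable def dissectionLaw : ℕ → ℝ := geomTail (2 - √2) ((2 - √2) / 2)

lemma norm_two_sub_sqrt_two_div_two_lt_one : ‖(2 - √2) / 2‖ < 1 := by
  have hs1 : 1 < √2 := Real.one_lt_sqrt_two
  have hs2 : √2 < 2 := by nlinarith [Real.sq_sqrt zero_le_two]
  rw [Real.norm_eq_abs, abs_lt]
  constructor <;> linarith

lemma one_sub_two_sub_sqrt_two_div_two : 1 - (2 - √2) / 2 = √2 / 2 := by ring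

lemma tsum_dissectionLaw : ∑' i, dissectionLaw i = 1 := by
  rw [dissectionLaw, (hasSum_geomTail norm_two_sub_sqrt_two_div_two_lt_one).tsum_eq,
    one_sub_two_sub_sqrt_two_div_two]
  field_simp
  linear_combination -Real.sq_sqrt zero_le_two

lemma tsum_coe_mul_dissectionLaw : ∑' i : ℕ, (i : ℝ) * dissectionLaw i = 1 := by
  rw [dissectionLaw, (hasSum_coe_mul_geomTail norm_two_sub_sqrt_two_div_two_lt_one).tsum_eq,
    one_sub_two_sub_sqrt_two_div_two]
  field_simp
  linear_combination -2 * Real.sq_sqrt zero_le_two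

lemma tsum_coe_sq_mul_dissectionLaw :
    ∑' i : ℕ, (i : ℝ) ^ 2 * dissectionLaw i = 4 * √2 - 3 := by
  rw [dissectionLaw, (hasSum_coe_sq_mul_geomTail norm_two_sub_sqrt_two_div_two_lt_one).tsum_eq,
    one_sub_two_sub_sqrt_two_div_two]
  field_simp
  linear_combination (-4 * √2 ^ 2 + 2 * √2 - 8) * Real.sq_sqrt zero_le_two

lemma tsum_dissectionLaw_two_mul : ∑' i : ℕ, dissectionLaw (2 * i) = (12 - 4 * √2) / 7 := by
  have hs := Real.sq_sqrt zero_le_two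
  have : 2 * √2 - 1 ≠ 0 := by linarith [Real.one_lt_sqrt_two]
  rw [dissectionLaw, (hasSum_geomTail_two_mul norm_two_sub_sqrt_two_div_two_lt_one).tsum_eq,
    show 1 - ((2 - √2) / 2) ^ 2 = (2 * √2 - 1) / 2 by linear_combination (-1 / 4) * hs]
  field_simp
  linear_combination -6 * hs

lemma sqrt_mul_sqrt_two_sub_sqrt_two :
    √(4 * (√2 - 1)) * √(2 - √2) = 2 * (√2 - 1) * √(√2) := by
  have hs1 := Real.one_lt_sqrt_two
  rw [← Real.sqrt_mul (by linarith),
    show 4 * (√2 - 1) * (2 - √2) = (2 * (√2 - 1)) ^ 2 * √2 by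
      linear_combination (4 - 4 * √2) * Real.sq_sqrt zero_le_two,
    Real.sqrt_mul (sq_nonneg _), Real.sqrt_sq (by linarith)]

lemma sqrt_sqrt_two_mul_rpow_three_fourths : √(√2) * (2 : ℝ) ^ ((3 : ℝ) / 4) = 2 := by
  rw [Real.sqrt_eq_rpow, Real.sqrt_eq_rpow, ← Real.rpow_mul zero_le_two,
    ← Real.rpow_add zero_lt_two]
  norm_num

/-- The case of uniform dissections: the offspring distribution `μ₀ = 2 − √2`, `μ₁ = 0`,
`μ_i = ((2 − √2)/2)^{i−1}` for `i ≥ 2` is a critical probability distribution, and its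
scaling constant is `c_tree(μ)·c_geo(μ) = (1/7)·(3 + √2)·2^{3/4}`. -/
theorem stmt_17 :
    let μ : ℕ → ℝ := fun i =>
      if i = 0 then 2 - Real.sqrt 2
      else if i = 1 then 0
      else ((2 - Real.sqrt 2) / 2) ^ (i - 1)
    let σ2 : ℝ := (∑' i : ℕ, (i : ℝ) ^ 2 * μ i) - 1
    let m2Z : ℝ := ∑' i : ℕ, μ (2 * i)
    let ctree : ℝ := 2 / (Real.sqrt σ2 * Real.sqrt (μ 0))
    let cgeo : ℝ := (1 / 4) * (σ2 + μ 0 * m2Z / (2 * m2Z - μ 0))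
    (∑' i : ℕ, μ i = 1) ∧ (∑' i : ℕ, (i : ℝ) * μ i = 1) ∧
      ctree * cgeo = (1 / 7) * (3 + Real.sqrt 2) * (2 : ℝ) ^ ((3 : ℝ) / 4) := by
  intro μ σ2 m2Z ctree cgeo
  have hs : √2 ^ 2 = 2 := Real.sq_sqrt zero_le_two
  have hs1 : 1 < √2 := Real.one_lt_sqrt_two
  have hσ2 : σ2 = 4 * (√2 - 1) := by
    change (∑' i : ℕ, (i : ℝ) ^ 2 * dissectionLaw i) - 1 = _
    rw [tsum_coe_sq_mul_dissectionLaw]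
    ring
  have hctree : ctree = 1 / ((√2 - 1) * √(√2)) := by
    change 2 / (√σ2 * √(2 - √2)) = _
    rw [hσ2, sqrt_mul_sqrt_two_sub_sqrt_two]
    field_simp
  have hcgeo : cgeo = (4 * √2 - 2) / 7 := by
    change 1 / 4 * (σ2 + (2 - √2) * m2Z / (2 * m2Z - (2 - √2))) = _
    have : 10 - √2 ≠ 0 := by nlinarith
    rw [hσ2, show m2Z = _ from tsum_dissectionLaw_two_mul,
      show 2 * ((12 - 4 * √2) / 7) - (2 - √2) = (10 - √2) / 7 by ring]
    field_simp
    linear_combination 16 * hs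
  refine ⟨tsum_dissectionLaw, tsum_coe_mul_dissectionLaw, ?_⟩
  have : √2 - 1 ≠ 0 := by linarith
  have : 0 < √(√2) := by positivity
  rw [hctree, hcgeo]
  field_simp
  linear_combination -(√2 ^ 2 + 2 * √2 - 3) * sqrt_sqrt_two_mul_rpow_three_fourths - 2 * hs
end

section
/- Let r ∈ (0,1) satisfy Σ_{k≥1} (2k+1)·r^{2k} = 1 (such r exists and is unique, and satisfies r² = (5 − √17)/4). Define the probability distribution ν by ν_{2k+1} = r^{2k} for every k ≥ 1, ν₀ = 1 − Σ_{k≥1} r^{2k}, and ν_i = 0 for all other i. Then ν is a critical probability distribution, and with σ² = Σ_{i≥0} i²·ν_i − 1, ν_{2Z} = Σ_{i≥0} ν_{2i}, c_tree(ν) = 2/(σ·√ν₀) and c_geo(ν) = (1/4)·(σ² + ν₀·ν_{2Z}/(2·ν_{2Z} − ν₀)), one has c_tree(ν)·c_geo(ν) = √(1/2 + 9/(2·√17)). -/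
/-!
Write `t = r²`. The weights of `ν` at odd indices form a geometric series in `t`, so all moments
of `ν` are rational functions of `t`, obtained from `∑ₙ C(n+k, k) tⁿ = (1 - t)^{-(k+1)}`.
Criticality becomes `2t² - 5t + 1 = 0`, whose only root in `(0, 1)` is `(5 - √17)/4`. At this
root `ν₀ = ν_{2ℤ} = (1 + 2t)/2` and `σ² = (9 - 14t)/2`, and `c_tree·c_geo = (σ² + ν₀)/(2√(σ²ν₀))`
simplifies to `√(1/2 + 9/(2√17))`.
-/

section GeneratingFunctions

variable {𝕜 : Type*} [NormedField 𝕜] {t : 𝕜}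

lemma hasSum_pow_succ_geometric (ht : ‖t‖ < 1) :
    HasSum (fun k : ℕ => t ^ (k + 1)) (t * (1 / (1 - t))) := by
  simpa [pow_succ', div_eq_mul_inv] using (hasSum_geometric_of_norm_lt_one ht).mul_left t

-- `2k + 3 = 2·C(k+1, 1) + 1` and `(2k + 3)² = 8·C(k+2, 2) + 1`.
lemma hasSum_odd_mul_pow_succ (ht : ‖t‖ < 1) :
    HasSum (fun k : ℕ => (2 * ((k : 𝕜) + 1) + 1) * t ^ (k + 1))
      (t * (2 / (1 - t) ^ 2 + 1 / (1 - t))) := by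
  have h := ((hasSum_choose_mul_geometric_of_norm_lt_one 1 ht).mul_left 2).add
    (hasSum_geometric_of_norm_lt_one ht)
  rw [← one_div, mul_one_div] at h
  refine (h.mul_left t).congr_fun fun k => ?_
  simp only [Nat.choose_one_right, Nat.cast_add, Nat.cast_one]
  ring

lemma hasSum_odd_sq_mul_pow_succ (ht : ‖t‖ < 1) :
    HasSum (fun k : ℕ => (2 * ((k : 𝕜) + 1) + 1) ^ 2 * t ^ (k + 1))
      (t * (8 / (1 - t) ^ 3 + 1 / (1 - t))) := by
  have h := ((hasSum_choose_mul_geometric_of_norm_lt_one 2 ht).mul_left 8).add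
    (hasSum_geometric_of_norm_lt_one ht)
  rw [← one_div, mul_one_div] at h
  refine (h.mul_left t).congr_fun fun k => ?_
  have hc : ((k + 2).choose 2 : 𝕜) * 2 = (k + 2) * (k + 1) := by
    have h : (k + 2) * (k + 1) = (k + 2).choose 2 * 2 := by
      simpa using Nat.add_one_mul_choose_eq (k + 1) 1
    simpa using (congrArg (Nat.cast : ℕ → 𝕜) h).symm
  linear_combination (-4 * t ^ (k + 1)) * hc

end GeneratingFunctions

theorem HasSum.zero_add_of_two_mul_add_three {M : Type*} [AddCommMonoid M] [TopologicalSpace M]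
    [ContinuousAdd M] {f : ℕ → M} {a : M} (heven : ∀ i ≠ 0, f (2 * i) = 0) (hone : f 1 = 0)
    (h : HasSum (fun k => f (2 * k + 3)) a) : HasSum f (f 0 + a) := by
  have he : HasSum (fun k => f (2 * k)) (f 0) := hasSum_single 0 heven
  have ho : HasSum (fun k => f (2 * k + 1)) a := by
    simpa [hone] using HasSum.zero_add (f := fun k => f (2 * k + 1)) h
  exact he.even_add_odd ho

section QuadraticRoot

variable {t : ℝ}

lemma mul_odd_generating_eq_one_iff (ht : t ≠ 1) :
    t * (2 / (1 - t) ^ 2 + 1 / (1 - t)) = 1 ↔ 2 * t ^ 2 - 5 * t + 1 = 0 := by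
  have h : 1 - t ≠ 0 := sub_ne_zero.2 (Ne.symm ht)
  rw [← sub_eq_zero, show t * (2 / (1 - t) ^ 2 + 1 / (1 - t)) - 1
    = -(2 * t ^ 2 - 5 * t + 1) / (1 - t) ^ 2 by field_simp; ring]
  simp only [div_eq_zero_iff, neg_eq_zero, pow_eq_zero_iff two_ne_zero, h, or_false]

lemma five_sub_sqrt_seventeen_div_four_mem : (5 - √17) / 4 ∈ Set.Ioo (0 : ℝ) (1 / 4) := by
  have h17 : √17 ^ 2 = 17 := Real.sq_sqrt (by norm_num)
  have hs : 0 ≤ √17 := Real.sqrt_nonneg 17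
  constructor <;> nlinarith

lemma quadratic_eq_zero_iff_of_lt_one (ht : t < 1) :
    2 * t ^ 2 - 5 * t + 1 = 0 ↔ t = (5 - √17) / 4 := by
  have h17 : √17 ^ 2 = 17 := Real.sq_sqrt (by norm_num)
  have hs : 0 ≤ √17 := Real.sqrt_nonneg 17
  have hfac : 2 * t ^ 2 - 5 * t + 1 = 2 * (t - (5 - √17) / 4) * (t - (5 + √17) / 4) := by
    linear_combination (1 / 8) * h17
  rw [hfac]
  constructor
  · intro h
    rcases mul_eq_zero.1 h with hsmall | hlarge
    · linarith [(mul_eq_zero.1 hsmall).resolve_left two_ne_zero]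
    · nlinarith
  · intro h
    rw [h]; ring

lemma one_sub_mul_one_div_eq_of_quadratic (hq : 2 * t ^ 2 - 5 * t + 1 = 0) :
    1 - t * (1 / (1 - t)) = (1 + 2 * t) / 2 := by
  have h : 1 - t ≠ 0 := fun h => by
    obtain rfl : t = 1 := by linarith
    norm_num at hq
  field_simp
  linear_combination hq

lemma mul_odd_sq_generating_sub_one_eq_of_quadratic (hq : 2 * t ^ 2 - 5 * t + 1 = 0) :
    t * (8 / (1 - t) ^ 3 + 1 / (1 - t)) - 1 = (9 - 14 * t) / 2 := by
  have h : 1 - t ≠ 0 := fun h => by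
    obtain rfl : t = 1 := by linarith
    norm_num at hq
  field_simp
  linear_combination (-7 * t ^ 2 + 10 * t - 11) * hq

lemma critical_ratio_eq (ht : t = (5 - √17) / 4) :
    ((9 - 14 * t) / 2 + (1 + 2 * t) / 2) ^ 2 / (4 * ((9 - 14 * t) / 2) * ((1 + 2 * t) / 2))
      = 1 / 2 + 9 / (2 * √17) := by
  have h17 : √17 ^ 2 = 17 := Real.sq_sqrt (by norm_num)
  have hs : 4 < √17 := by nlinarith [Real.sqrt_nonneg 17]
  have hs5 : √17 < 5 := by nlinarith [Real.sqrt_nonneg 17]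
  have h1 : 0 < 9 - 14 * t := by rw [ht]; linarith
  have h2 : 0 < 1 + 2 * t := by rw [ht]; linarith
  rw [div_add_div (1 : ℝ) 9 two_ne_zero (by positivity),
    div_eq_div_iff (by positivity) (by positivity), ht]
  linear_combination ((25 * √17 - 63) / 2) * h17

end QuadraticRoot

open Classical in
noncomputable def evenDissectionOffspring (r : ℝ) : ℕ → ℝ := fun i =>
  if i = 0 then 1 - ∑' k : ℕ, r ^ (2 * (k + 1))
  else if Odd i ∧ i ≠ 1 then r ^ (i - 1)
  else 0

section EvenDissectionOffspring

variable {r : ℝ}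

lemma norm_sq_lt_one_of_sq_lt_one (hr : r ^ 2 < 1) : ‖r ^ 2‖ < 1 := by
  rwa [Real.norm_of_nonneg (sq_nonneg r)]

lemma evenDissectionOffspring_zero (hr : r ^ 2 < 1) :
    evenDissectionOffspring r 0 = 1 - r ^ 2 * (1 / (1 - r ^ 2)) := by
  simp only [evenDissectionOffspring, if_true, pow_mul,
    (hasSum_pow_succ_geometric (norm_sq_lt_one_of_sq_lt_one hr)).tsum_eq]

lemma evenDissectionOffspring_one : evenDissectionOffspring r 1 = 0 := by
  simp [evenDissectionOffspring]

lemma evenDissectionOffspring_two_mul {i : ℕ} (hi : i ≠ 0) :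
    evenDissectionOffspring r (2 * i) = 0 := by
  simp [evenDissectionOffspring, hi]

lemma evenDissectionOffspring_two_mul_add_three (k : ℕ) :
    evenDissectionOffspring r (2 * k + 3) = (r ^ 2) ^ (k + 1) := by
  have hodd : Odd (2 * k + 3) := ⟨k + 1, by ring⟩
  simp only [evenDissectionOffspring, hodd, true_and]
  rw [if_neg (by omega), if_pos (by omega), show 2 * k + 3 - 1 = 2 * (k + 1) by omega, pow_mul]

lemma evenDissectionOffspring_nonneg (hr : r ^ 2 ≤ 1 / 2) (i : ℕ) :
    0 ≤ evenDissectionOffspring r i := by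
  have hr1 : r ^ 2 < 1 := by linarith
  rcases eq_or_ne i 0 with rfl | hi
  · rw [evenDissectionOffspring_zero hr1, mul_one_div, sub_nonneg,
      div_le_one (by linarith)]
    linarith
  · simp only [evenDissectionOffspring, if_neg hi]
    split_ifs with hodd
    · exact (Nat.Odd.sub_odd hodd.1 odd_one).pow_nonneg r
    · rfl

lemma hasSum_mul_evenDissectionOffspring {g : ℕ → ℝ} {a : ℝ}
    (h : HasSum (fun k : ℕ => g (2 * k + 3) * (r ^ 2) ^ (k + 1)) a) :
    HasSum (fun i => g i * evenDissectionOffspring r i)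
      (g 0 * evenDissectionOffspring r 0 + a) :=
  HasSum.zero_add_of_two_mul_add_three
    (fun i hi => by rw [evenDissectionOffspring_two_mul hi, mul_zero])
    (by rw [evenDissectionOffspring_one, mul_zero])
    (by simpa only [evenDissectionOffspring_two_mul_add_three] using h)

lemma hasSum_evenDissectionOffspring (hr : r ^ 2 < 1) :
    HasSum (evenDissectionOffspring r) 1 := by
  have h := hasSum_mul_evenDissectionOffspring (g := fun _ => 1)
    (by simpa using hasSum_pow_succ_geometric (norm_sq_lt_one_of_sq_lt_one hr))
  simpa [evenDissectionOffspring_zero hr] using h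

lemma hasSum_coe_mul_evenDissectionOffspring (hr : r ^ 2 < 1) :
    HasSum (fun i : ℕ => (i : ℝ) * evenDissectionOffspring r i)
      (r ^ 2 * (2 / (1 - r ^ 2) ^ 2 + 1 / (1 - r ^ 2))) := by
  have h := hasSum_mul_evenDissectionOffspring (g := fun i : ℕ => (i : ℝ))
    ((hasSum_odd_mul_pow_succ (norm_sq_lt_one_of_sq_lt_one hr)).congr_fun fun k => by
      push_cast; ring)
  simpa using h

lemma hasSum_sq_mul_evenDissectionOffspring (hr : r ^ 2 < 1) :
    HasSum (fun i : ℕ => (i : ℝ) ^ 2 * evenDissectionOffspring r i)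
      (r ^ 2 * (8 / (1 - r ^ 2) ^ 3 + 1 / (1 - r ^ 2))) := by
  have h := hasSum_mul_evenDissectionOffspring (g := fun i : ℕ => (i : ℝ) ^ 2)
    ((hasSum_odd_sq_mul_pow_succ (norm_sq_lt_one_of_sq_lt_one hr)).congr_fun fun k => by
      push_cast; ring)
  simpa using h

lemma tsum_evenDissectionOffspring_two_mul :
    ∑' i : ℕ, evenDissectionOffspring r (2 * i) = evenDissectionOffspring r 0 :=
  tsum_eq_single 0 fun _ hi => evenDissectionOffspring_two_mul hi

lemma tsum_odd_mul_pow_two_mul (hr : r ^ 2 < 1) :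
    ∑' k : ℕ, (2 * ((k : ℝ) + 1) + 1) * r ^ (2 * (k + 1))
      = r ^ 2 * (2 / (1 - r ^ 2) ^ 2 + 1 / (1 - r ^ 2)) := by
  simpa only [pow_mul] using (hasSum_odd_mul_pow_succ (norm_sq_lt_one_of_sq_lt_one hr)).tsum_eq

lemma tsum_odd_mul_pow_two_mul_eq_one_iff (hr : r ^ 2 < 1) :
    ∑' k : ℕ, (2 * ((k : ℝ) + 1) + 1) * r ^ (2 * (k + 1)) = 1 ↔ r ^ 2 = (5 - √17) / 4 := by
  rw [tsum_odd_mul_pow_two_mul hr, mul_odd_generating_eq_one_iff hr.ne,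
    quadratic_eq_zero_iff_of_lt_one hr]

end EvenDissectionOffspring

/-- `c_tree(ν)·c_geo(ν)` as a function of `σ²`, `ν₀` and `ν_{2ℤ}`. -/
noncomputable def scalingConstant (σ2 ν0 ν2Z : ℝ) : ℝ :=
  2 / (√σ2 * √ν0) * ((1 / 4) * (σ2 + ν0 * ν2Z / (2 * ν2Z - ν0)))

lemma scalingConstant_self {σ2 ν0 : ℝ} (hσ : 0 < σ2) (hν : 0 < ν0) :
    scalingConstant σ2 ν0 ν0 = √((σ2 + ν0) ^ 2 / (4 * σ2 * ν0)) := by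
  unfold scalingConstant
  rw [show 2 * ν0 - ν0 = ν0 by ring, mul_div_cancel_right₀ _ hν.ne']
  rw [← Real.sqrt_sq (by positivity : 0 ≤ 2 / (√σ2 * √ν0) * (1 / 4 * (σ2 + ν0)))]
  congr 1
  field_simp
  rw [Real.sq_sqrt hσ.le, Real.sq_sqrt hν.le]
  ring

open Classical in
/-- Dissections with all face degrees even (Section 5.2): there is a unique `r ∈ (0,1)`
with `Σ_{k≥1} (2k+1)·r^{2k} = 1`; it satisfies `r² = (5 − √17)/4`, the associated
offspring distribution `ν` (with `ν_{2k+1} = r^{2k}` for `k ≥ 1` and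
`ν₀ = 1 − Σ_{k≥1} r^{2k}`) is a critical probability distribution, and its scaling
constant is `c_tree(ν)·c_geo(ν) = √(1/2 + 9/(2√17))`. -/
theorem stmt_18 :
    (∃ r ∈ Set.Ioo (0 : ℝ) 1,
      ∑' k : ℕ, (2 * ((k : ℝ) + 1) + 1) * r ^ (2 * (k + 1)) = 1) ∧
    (∀ r ∈ Set.Ioo (0 : ℝ) 1,
      (∑' k : ℕ, (2 * ((k : ℝ) + 1) + 1) * r ^ (2 * (k + 1)) = 1) →
      (r ^ 2 = (5 - Real.sqrt 17) / 4 ∧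
        (let ν : ℕ → ℝ := fun i =>
            if i = 0 then 1 - ∑' k : ℕ, r ^ (2 * (k + 1))
            else if Odd i ∧ i ≠ 1 then r ^ (i - 1)
            else 0;
          (∀ i, 0 ≤ ν i) ∧ (∑' i : ℕ, ν i = 1) ∧ (∑' i : ℕ, (i : ℝ) * ν i = 1) ∧
            (let σ2 : ℝ := (∑' i : ℕ, (i : ℝ) ^ 2 * ν i) - 1
             let n2Z : ℝ := ∑' i : ℕ, ν (2 * i)
             let ctree : ℝ := 2 / (Real.sqrt σ2 * Real.sqrt (ν 0))
             let cgeo : ℝ := (1 / 4) * (σ2 + ν 0 * n2Z / (2 * n2Z - ν 0))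
             ctree * cgeo = Real.sqrt (1 / 2 + 9 / (2 * Real.sqrt 17)))))) := by
  obtain ⟨hc0, hc1⟩ := five_sub_sqrt_seventeen_div_four_mem
  refine ⟨⟨√((5 - √17) / 4), ⟨Real.sqrt_pos.2 hc0, (Real.sqrt_lt' one_pos).2 (by linarith)⟩,
    (tsum_odd_mul_pow_two_mul_eq_one_iff ?_).2 (Real.sq_sqrt hc0.le)⟩, fun r ⟨hr0, hr1⟩ hsum => ?_⟩
  · rw [Real.sq_sqrt hc0.le]; linarith
  have hr : r ^ 2 < 1 := by nlinarith
  have ht := (tsum_odd_mul_pow_two_mul_eq_one_iff hr).1 hsum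
  have hq := (quadratic_eq_zero_iff_of_lt_one hr).2 ht
  refine ⟨ht, ?_⟩
  intro ν
  rw [show ν = evenDissectionOffspring r from rfl]
  refine ⟨evenDissectionOffspring_nonneg (by linarith), (hasSum_evenDissectionOffspring hr).tsum_eq,
    ?_, ?_⟩
  · rw [(hasSum_coe_mul_evenDissectionOffspring hr).tsum_eq, ← tsum_odd_mul_pow_two_mul hr, hsum]
  · show scalingConstant _ _ _ = _
    rw [(hasSum_sq_mul_evenDissectionOffspring hr).tsum_eq, tsum_evenDissectionOffspring_two_mul,
      evenDissectionOffspring_zero hr, one_sub_mul_one_div_eq_of_quadratic hq,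
      mul_odd_sq_generating_sub_one_eq_of_quadratic hq,
      scalingConstant_self (by linarith) (by linarith), critical_ratio_eq ht]
end
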